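/- arXiv:1403.7761 — 4 statements merged into one kernel-verified Lean document; each statement's English description precedes it below -/
import Mathlib

section
/- For the right-continuous random walk R_n = n - S_n started at 0, where S_n is a sum of i.i.d. ℕ-valued claims with law (p_k), the first hitting time τ_x = inf{n : R_n = x} of a positive integer level x satisfies Kendall's identity: P(τ_x = ω) = (x/ω) P(R_ω = x) = (x/ω) p^{*ω}_{ω - x} for every integer ω ≥ x, where p^{*ω} denotes the ω-fold convolution of (p_k). -/
open MeasureTheory ProbabilityTheory Filter
open scoped ENNReal

noncomputable section

variable {Ω : Type*} [MeasureSpace Ω]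

/-- Aggregate claims `S_n = Y_1 + ... + Y_n`. -/
def aggClaims (Y : ℕ → Ω → ℕ) (t : ℕ) (ω : Ω) : ℕ := ∑ i ∈ Finset.range t, Y i ω

/-- Right-continuous random walk `R_n = n - S_n` started at `0`. -/
def walk (Y : ℕ → Ω → ℕ) (n : ℕ) (ω : Ω) : ℤ := n - aggClaims Y n ω

/-- First hitting time of level `x` by the walk `R_n = n - S_n`. -/
def hitTime (Y : ℕ → Ω → ℕ) (x : ℤ) (ω : Ω) : ℕ∞ :=
  sInf ((fun n : ℕ => (n : ℕ∞)) '' {n : ℕ | 1 ≤ n ∧ walk Y n ω = x})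

/-!
Kendall's identity is the cycle lemma averaged over cyclic rotations. Extend the first `w`
claims `w`-periodically; the walk then gains `R_w` per period. If `R_w = x > 0`, exactly `x` of
the `w` rotations of the claim vector reach level `x` for the first time at time `w`: a rotation
by `k` is good iff `k + w` is a strict record of the periodic walk, and since the walk climbs by
at most one per step, the strict records in a window of length `w` raise the running maximum by
exactly `x`, one unit each. The i.i.d. law of the claim vector is rotation invariant, so
`w P(τ_x = w) = E[#good rotations] = x P(R_w = x)`.
-/

open Finset

section SkipFreeWalk

variable (y : ℕ → ℕ)

-- `walk Y n ω` unfolds to `seqWalk (Y · ω) n`.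
def seqWalk (n : ℕ) : ℤ := n - ((∑ i ∈ range n, y i : ℕ) : ℤ)

@[simp] lemma seqWalk_zero : seqWalk y 0 = 0 := by simp [seqWalk]

lemma seqWalk_succ (n : ℕ) : seqWalk y (n + 1) = seqWalk y n + 1 - y n := by
  simp only [seqWalk, sum_range_succ]; push_cast; ring

lemma seqWalk_succ_le (n : ℕ) : seqWalk y (n + 1) ≤ seqWalk y n + 1 := by
  rw [seqWalk_succ]; omega

lemma seqWalk_add (m n : ℕ) :
    seqWalk y (m + n) = seqWalk y m + seqWalk (fun i => y (m + i)) n := by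
  simp only [seqWalk, sum_range_add]; push_cast; ring

lemma seqWalk_congr {z : ℕ → ℕ} {n : ℕ} (h : ∀ i < n, y i = z i) :
    seqWalk y n = seqWalk z n := by
  simp only [seqWalk, sum_congr rfl fun i hi => h i (mem_range.mp hi)]

variable {y} {w : ℕ}

lemma seqWalk_add_period (hper : ∀ n, y (n + w) = y n) (n : ℕ) :
    seqWalk y (n + w) = seqWalk y n + seqWalk y w := by
  induction n with
  | zero => simp
  | succ n ih =>
    rw [show n + 1 + w = n + w + 1 by omega, seqWalk_succ, seqWalk_succ, hper, ih]; ring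

lemma seqWalk_lt_of_forall_ne {x : ℤ} (hx : 0 < x) (h : ∀ n < w, 0 < n → seqWalk y n ≠ x) :
    ∀ n < w, seqWalk y n < x := by
  intro n
  induction n with
  | zero => intro _; simpa using hx
  | succ n ih =>
    intro hn
    have := seqWalk_succ_le y n
    have := h (n + 1) hn n.succ_pos
    have := ih (by omega)
    omega

def IsFirstPassage (y : ℕ → ℕ) (x : ℤ) (w : ℕ) : Prop :=
  seqWalk y w = x ∧ ∀ n < w, seqWalk y n < x

lemma isFirstPassage_congr {y z : ℕ → ℕ} {x : ℤ} {w : ℕ} (h : ∀ i < w, y i = z i) :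
    IsFirstPassage y x w ↔ IsFirstPassage z x w := by
  have hle : ∀ n ≤ w, seqWalk y n = seqWalk z n := fun n hn =>
    seqWalk_congr y fun i hi => h i (by omega)
  simp only [IsFirstPassage, hle w le_rfl]
  exact and_congr_right' (forall₂_congr fun n hn => by rw [hle n hn.le])

lemma isLeast_iff_isFirstPassage {y : ℕ → ℕ} {x w : ℕ} (hx : 0 < x) :
    IsLeast {n | 1 ≤ n ∧ seqWalk y n = x} w ↔ IsFirstPassage y x w := by
  constructor
  · rintro ⟨⟨-, hw⟩, hmin⟩
    exact ⟨hw, seqWalk_lt_of_forall_ne (by exact_mod_cast hx) fun n hn hn0 hnx =>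
      (hmin ⟨hn0, hnx⟩).not_gt hn⟩
  · rintro ⟨hw, hlt⟩
    refine ⟨⟨Nat.pos_of_ne_zero ?_, hw⟩, fun n ⟨_, hn⟩ => not_lt.mp fun hnw => ?_⟩
    · rintro rfl
      simp at hw
      omega
    · exact (hlt n hnw).ne hn

end SkipFreeWalk

section RunningMaximum

variable (y : ℕ → ℕ) {w : ℕ}

def runningMax : ℕ → ℤ
  | 0 => 0
  | n + 1 => max (runningMax n) (seqWalk y (n + 1))

lemma seqWalk_le_runningMax {m n : ℕ} (h : m ≤ n) : seqWalk y m ≤ runningMax y n := by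
  induction n with
  | zero => simp [Nat.le_zero.mp h, runningMax]
  | succ n ih =>
    rcases h.lt_or_eq with h | rfl
    · exact (ih (by omega)).trans (le_max_left _ _)
    · exact le_max_right _ _

lemma exists_runningMax_eq_seqWalk (n : ℕ) : ∃ m ≤ n, runningMax y n = seqWalk y m := by
  induction n with
  | zero => exact ⟨0, le_rfl, by simp [runningMax]⟩
  | succ n ih =>
    obtain ⟨m, hm, hM⟩ := ih
    rcases le_total (seqWalk y (n + 1)) (runningMax y n) with h | h
    · exact ⟨m, by omega, by rw [runningMax, max_eq_left h, hM]⟩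
    · exact ⟨n + 1, le_rfl, by rw [runningMax, max_eq_right h]⟩

def IsStrictRecord (j : ℕ) : Prop := ∀ m < j, seqWalk y m < seqWalk y j

open Classical in
lemma runningMax_succ (n : ℕ) :
    runningMax y (n + 1) = runningMax y n + if IsStrictRecord y (n + 1) then 1 else 0 := by
  obtain ⟨m, hm, hM⟩ := exists_runningMax_eq_seqWalk y n
  have hstep := seqWalk_succ_le y n
  have hn := seqWalk_le_runningMax y le_rfl (n := n)
  rw [runningMax]
  split_ifs with hrec
  · have := hM ▸ hrec m (by omega)
    omega
  · obtain ⟨k, hk, hle⟩ : ∃ k < n + 1, seqWalk y (n + 1) ≤ seqWalk y k := by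
      simpa [IsStrictRecord] using hrec
    have := seqWalk_le_runningMax y (show k ≤ n by omega)
    omega

open Classical in
lemma card_isStrictRecord (a n : ℕ) :
    (#{i ∈ range n | IsStrictRecord y (a + i + 1)} : ℤ) = runningMax y (a + n) - runningMax y a := by
  have htelescope := sum_range_sub (fun i => runningMax y (a + i)) n
  rw [add_zero] at htelescope
  rw [natCast_card_filter, ← htelescope]
  refine sum_congr rfl fun i _ => ?_
  rw [← add_assoc, runningMax_succ]
  ring

variable {y}

lemma runningMax_add_period (hper : ∀ n, y (n + w) = y n) (hw : 0 ≤ seqWalk y w) {n : ℕ}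
    (hn : w ≤ n + 1) : runningMax y (n + w) = runningMax y n + seqWalk y w := by
  apply le_antisymm
  · obtain ⟨m, hm, hM⟩ := exists_runningMax_eq_seqWalk y (n + w)
    rw [hM]
    rcases lt_or_ge m w with h | h
    · have := seqWalk_le_runningMax y (show m ≤ n by omega)
      omega
    · obtain ⟨k, rfl⟩ := Nat.exists_eq_add_of_le' h
      rw [seqWalk_add_period hper]
      have := seqWalk_le_runningMax y (show k ≤ n by omega)
      omega
  · obtain ⟨m, hm, hM⟩ := exists_runningMax_eq_seqWalk y n
    rw [hM, ← seqWalk_add_period hper]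
    exact seqWalk_le_runningMax y (by omega)

end RunningMaximum

section CycleLemma

variable {y : ℕ → ℕ} {w : ℕ} (hper : ∀ n, y (n + w) = y n)
include hper

lemma seqWalk_shift_period (k : ℕ) : seqWalk (fun i => y (k + i)) w = seqWalk y w := by
  have := seqWalk_add y k w
  rw [seqWalk_add_period hper] at this
  omega

lemma isFirstPassage_shift_iff {x : ℕ} (hx : seqWalk y w = x) {k : ℕ} (hk : k < w) :
    IsFirstPassage (fun i => y (k + i)) x w ↔ IsStrictRecord y (k + w) := by
  have hshift (n : ℕ) : seqWalk (fun i => y (k + i)) n = seqWalk y (k + n) - seqWalk y k := by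
    rw [seqWalk_add]; ring
  have hkw := seqWalk_add_period hper k
  simp only [IsFirstPassage, seqWalk_shift_period hper, hx, true_and, hshift, IsStrictRecord]
  constructor
  · intro h m hm
    rcases lt_or_ge m k with hmk | hkm
    · have := h (m + w - k) (by omega)
      rw [show k + (m + w - k) = m + w by omega, seqWalk_add_period hper] at this
      omega
    · have := h (m - k) (by omega)
      rw [show k + (m - k) = m by omega] at this
      omega
  · intro h n hn
    have := h (k + n) (by omega)
    omega

open Classical in
/-- The cycle lemma. The good shifts are the strict records `w, …, 2w - 1`, which raise the
running maximum from time `w - 1` to time `2w - 1` by `x`, one unit each. -/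
theorem card_isFirstPassage_shift {x : ℕ} (hx : 0 < x) :
    #{k ∈ range w | IsFirstPassage (fun i => y (k + i)) x w} =
      if seqWalk y w = x then x else 0 := by
  split_ifs with hxw
  · have hw : 0 < w := by
      rcases Nat.eq_zero_or_pos w with rfl | hw
      · simp at hxw; omega
      · exact hw
    have hrec := card_isStrictRecord y (w - 1) w
    rw [runningMax_add_period hper (by omega) (by omega)] at hrec
    rw [filter_congr fun k hk => isFirstPassage_shift_iff hper hxw (mem_range.mp hk)]
    rw [filter_congr fun k _ => show IsStrictRecord y (k + w) ↔ _ from by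
      rw [show k + w = w - 1 + k + 1 by omega]]
    omega
  · rw [card_eq_zero, filter_eq_empty_iff]
    exact fun k _ h => hxw (seqWalk_shift_period hper k ▸ h.1)

end CycleLemma

section CyclicVectors

open Fin.NatCast

variable {w : ℕ} [NeZero w]

def cycExt (v : Fin w → ℕ) (n : ℕ) : ℕ := v n

lemma cycExt_add_period (v : Fin w → ℕ) (n : ℕ) : cycExt v (n + w) = cycExt v n := by
  simp [cycExt]

lemma cycExt_of_lt (v : Fin w → ℕ) {n : ℕ} (hn : n < w) : cycExt v n = v ⟨n, hn⟩ := by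
  simp only [cycExt]
  congr 1
  exact Fin.ext (Fin.val_cast_of_lt hn)

lemma cycExt_rotate (v : Fin w → ℕ) (k : Fin w) :
    cycExt (fun i => v (k + i)) = fun n => cycExt v (k + n) := by
  ext n
  simp [cycExt, Fin.cast_val_eq_self]

lemma measurePreserving_rotate {α : Type*} [MeasurableSpace α] (μ : Measure α) [SigmaFinite μ]
    (k : Fin w) :
    MeasurePreserving (fun v : Fin w → α => fun i => v (k + i))
      (Measure.pi fun _ => μ) (Measure.pi fun _ => μ) :=
  measurePreserving_arrowCongr' (fun _ => μ) (fun _ => μ) (Equiv.addLeft k).symm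
    (MeasurableEquiv.refl α) fun _ => MeasurePreserving.id μ

theorem natCast_mul_pi_isFirstPassage (μ : Measure ℕ) [SigmaFinite μ] {x : ℕ} (hx : 0 < x) :
    (w : ℝ≥0∞) * Measure.pi (fun _ : Fin w => μ) {v | IsFirstPassage (cycExt v) x w} =
      x * Measure.pi (fun _ : Fin w => μ) {v | seqWalk (cycExt v) w = x} := by
  classical
  set ν := Measure.pi fun _ : Fin w => μ
  set G := {v : Fin w → ℕ | IsFirstPassage (cycExt v) x w}
  have hcount (v : Fin w → ℕ) :
      ∑ k : Fin w, ((fun v i => v (k + i)) ⁻¹' G).indicator 1 v =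
        {v | seqWalk (cycExt v) w = x}.indicator (fun _ => (x : ℝ≥0∞)) v := by
    simp only [Set.indicator_apply, Set.mem_preimage, Set.mem_ofPred_eq, G, cycExt_rotate,
      Pi.one_apply]
    rw [Fin.sum_univ_eq_sum_range (fun k => if IsFirstPassage (fun n => cycExt v (k + n)) x w
      then (1 : ℝ≥0∞) else 0), sum_boole,
      card_isFirstPassage_shift (cycExt_add_period v) hx]
    split_ifs <;> simp
  calc (w : ℝ≥0∞) * ν G
      = ∑ _k : Fin w, ν G := by simp
    _ = ∑ k : Fin w, ν ((fun v i => v (k + i)) ⁻¹' G) := sum_congr rfl fun k _ =>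
        ((measurePreserving_rotate μ k).measure_preimage
          MeasurableSet.of_discrete.nullMeasurableSet).symm
    _ = ∫⁻ v, ∑ k : Fin w, ((fun v i => v (k + i)) ⁻¹' G).indicator 1 v ∂ν := by
        rw [lintegral_finsetSum _ fun _ _ => measurable_of_countable _]
        simp only [lintegral_indicator_one MeasurableSet.of_discrete]
    _ = x * ν {v | seqWalk (cycExt v) w = x} := by
        simp only [hcount, lintegral_indicator_const MeasurableSet.of_discrete]

lemma seqWalk_cycExt_restrict (y : ℕ → ℕ) :
    seqWalk (cycExt fun i : Fin w => y i) w = seqWalk y w :=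
  seqWalk_congr _ fun _ hi => cycExt_of_lt _ hi

lemma isFirstPassage_cycExt_restrict (y : ℕ → ℕ) {x : ℤ} :
    IsFirstPassage (cycExt fun i : Fin w => y i) x w ↔ IsFirstPassage y x w :=
  isFirstPassage_congr fun _ hi => cycExt_of_lt _ hi

end CyclicVectors

lemma sInf_image_natCast_eq_iff {s : Set ℕ} {w : ℕ} :
    sInf ((↑) '' s : Set ℕ∞) = w ↔ IsLeast s w := by
  have hleast {m : ℕ} (hm : IsLeast s m) : sInf ((↑) '' s : Set ℕ∞) = m :=
    (Nat.mono_cast.map_isLeast hm).isGLB.sInf_eq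
  refine ⟨fun h => ?_, hleast⟩
  obtain ⟨m, hm⟩ : s.Nonempty := by
    by_contra hempty
    simp [Set.not_nonempty_iff_eq_empty.mp hempty] at h
  have hmin : IsLeast s (sInf s) := ⟨Nat.sInf_mem ⟨m, hm⟩, fun n hn => Nat.sInf_le hn⟩
  rw [hleast hmin, Nat.cast_inj] at h
  exact h ▸ hmin

lemma map_fin_eq_pi {Y : ℕ → Ω → ℕ} (hY : ∀ i, Measurable (Y i)) (hindep : iIndepFun Y ℙ)
    (hid : ∀ i, IdentDistrib (Y i) (Y 0) ℙ ℙ) (w : ℕ) :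
    (ℙ : Measure Ω).map (fun ω (i : Fin w) => Y i ω) =
      Measure.pi fun _ => (ℙ : Measure Ω).map (Y 0) := by
  rw [(hindep.precomp Fin.val_injective).map_fun_eq_pi_map (f := fun i : Fin w => Y i)
    fun i => (hY i).aemeasurable]
  simp only [(hid _).map_eq]

/-- Kendall's identity: `P(τ_x = ω) = (x/ω) P(R_ω = x) = (x/ω) p^{*ω}_{ω-x}`. -/
theorem kendall_identity
    [IsProbabilityMeasure (ℙ : Measure Ω)]
    (Y : ℕ → Ω → ℕ) (hY : ∀ i, Measurable (Y i))
    (hindep : iIndepFun Y ℙ)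
    (hid : ∀ i, IdentDistrib (Y i) (Y 0) ℙ ℙ)
    (x : ℕ) (hx : 1 ≤ x) (w : ℕ) (hw : x ≤ w) :
    ℙ {ω | hitTime Y (x : ℤ) ω = (w : ℕ∞)} =
      ((x : ℝ≥0∞) / w) * ℙ {ω | walk Y w ω = (x : ℤ)} ∧
    ℙ {ω | hitTime Y (x : ℤ) ω = (w : ℕ∞)} =
      ((x : ℝ≥0∞) / w) * ℙ {ω | aggClaims Y w ω = w - x} := by
  have : NeZero w := ⟨by omega⟩
  set ν := Measure.pi fun _ : Fin w => (ℙ : Measure Ω).map (Y 0)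
  have hlaw (s : Set (Fin w → ℕ)) : ℙ ((fun ω (i : Fin w) => Y i ω) ⁻¹' s) = ν s := by
    rw [← Measure.map_apply (measurable_pi_lambda (fun ω (i : Fin w) => Y i ω) fun i => hY i)
      MeasurableSet.of_discrete, map_fin_eq_pi hY hindep hid]
  have hhit : ℙ {ω | hitTime Y x ω = w} = ν {v | IsFirstPassage (cycExt v) x w} := by
    rw [← hlaw]
    congr 1
    ext ω
    exact (sInf_image_natCast_eq_iff.trans (isLeast_iff_isFirstPassage hx)).trans
      (isFirstPassage_cycExt_restrict _).symm
  have hwalk : ℙ {ω | walk Y w ω = x} = ν {v | seqWalk (cycExt v) w = x} := by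
    rw [← hlaw]
    congr 1
    ext ω
    exact Iff.of_eq (congrArg (· = (x : ℤ)) (seqWalk_cycExt_restrict (Y · ω)).symm)
  have hagg : {ω | aggClaims Y w ω = w - x} = {ω | walk Y w ω = x} := by
    ext ω
    simp only [Set.mem_ofPred_eq, walk]
    omega
  rw [hagg, and_self, hhit, hwalk, div_eq_mul_inv, mul_right_comm, ← div_eq_mul_inv,
    ENNReal.eq_div_iff (by simp; omega) (ENNReal.natCast_ne_top w)]
  exact natCast_mul_pi_isFirstPassage _ hx

end
end

section
/- (Seal-type formula) For the discrete-time risk process with i.i.d. ℕ-valued claims of law (p_k), initial capital u ≥ 1 and t ≥ 1, the survival probability satisfies P_u(T_0 ≥ t+1) = Σ_{j=0}^{u+t-1} p^{*t}_j − Σ_{j=u+1}^{u+t-1} p^{*(j-u)}_j ( Σ_{n=j}^{u+t-1} ((t+u−n)/(t+u−j)) p^{*(t+u−j)}_{n−j} ). -/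
open MeasureTheory ProbabilityTheory Filter
open scoped ENNReal

noncomputable section

variable {Ω : Type*} [MeasureSpace Ω]

/-- Risk process `R_t = u + t - S_t`. -/
def riskProc (Y : ℕ → Ω → ℕ) (u : ℤ) (t : ℕ) (ω : Ω) : ℤ := u + t - aggClaims Y t ω

/-- Classical ruin time `T_0 = inf {t ≥ 1 : R_t ≤ 0}`. -/
def ruinTime (Y : ℕ → Ω → ℕ) (u : ℤ) (ω : Ω) : ℕ∞ :=
  sInf ((fun t : ℕ => (t : ℕ∞)) '' {t : ℕ | 1 ≤ t ∧ riskProc Y u t ω ≤ 0})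

/-- The `m`-fold convolution `p^{*m}_j = P(Y_1 + ... + Y_m = j)` (as a real number). -/
def conv (Y : ℕ → Ω → ℕ) (m j : ℕ) : ℝ := (ℙ {ω | aggClaims Y m ω = j}).toReal

/-!
Given the law `q` of a claim, the events involved are finite sets of claim tuples `y`, whose
probability is the total weight `∑ ∏ i, q (y i)`. A tuple with `S_t < u + t` that is ruined before
time `t` has a last ruin time `σ < t`; since claims are integers and the premium is one per step,
`S_σ = u + σ` exactly, and the remaining `t - σ` claims form a ballot sequence (all partial sums
`S'_r < r`). By the cycle lemma, exactly `m - k` of the `m` cyclic rotations of a tuple of length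
`m` and sum `k ≤ m` are ballot sequences, so ballot sequences carry the fraction `(m - k) / m` of
the weight `p^{*m}_k`. Summing over `σ` gives the formula.
-/

open Finset

theorem exists_forall_le_of_add_period {W : ℕ → ℤ} {m d : ℕ} (hm : 0 < m)
    (hper : ∀ n, W (n + m) = W n + d) : ∃ n₀ < m, ∀ n, W n₀ ≤ W n := by
  obtain ⟨n₀, hn₀, hmin⟩ := (range m).exists_min_image W ⟨0, mem_range.2 hm⟩
  refine ⟨n₀, mem_range.1 hn₀, fun n => ?_⟩
  induction n using Nat.strong_induction_on with
  | _ n ih =>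
    rcases lt_or_ge n m with h | h
    · exact hmin n (mem_range.2 h)
    · have := hper (n - m)
      rw [Nat.sub_add_cancel h] at this
      linarith [ih (n - m) (by omega)]

/-- The good starting points are the last visits in `[0, m)` to the levels
`min W, …, min W + d - 1`. -/
theorem cycle_lemma {W : ℕ → ℤ} {m d : ℕ} (hm : 0 < m) (hstep : ∀ n, W (n + 1) ≤ W n + 1)
    (hper : ∀ n, W (n + m) = W n + d) :
    #{c ∈ range m | ∀ r ∈ Icc (1 : ℕ) m, W c < W (c + r)} = d := by
  obtain ⟨n₀, hn₀, hge⟩ := exists_forall_le_of_add_period hm hper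
  set good := {c ∈ range m | ∀ r ∈ Icc (1 : ℕ) m, W c < W (c + r)}
  have hgood : ∀ c ∈ good, ∀ n, c < n → n ≤ c + m → W c < W n := fun c hc n h₁ h₂ => by
    have := (mem_filter.1 hc).2 (n - c) (mem_Icc.2 ⟨by omega, by omega⟩)
    rwa [Nat.add_sub_cancel' h₁.le] at this
  have hlt : ∀ c ∈ good, c < m := fun c hc => mem_range.1 (mem_filter.1 hc).1
  have hcard : #(Ico (W n₀) (W n₀ + d)) = d := by simp
  rw [← hcard]
  refine card_bij (fun c _ => W c) (fun c hc => mem_Ico.2 ⟨hge c, ?_⟩)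
    (fun c hc c' hc' hW => ?_) (fun v hv => ?_)
  · have := hlt c hc
    rcases le_or_gt n₀ c with h | h
    · simpa [hper] using hgood c hc (n₀ + m) (by omega) (by omega)
    · linarith [hgood c hc n₀ h (by omega), hge c]
  · have := hlt c hc
    have := hlt c' hc'
    rcases lt_trichotomy c c' with h | h | h
    · linarith [hgood c hc c' h (by omega)]
    · exact h
    · linarith [hgood c' hc' c h (by omega)]
  · rw [mem_Ico] at hv
    obtain ⟨c, hc, hmax⟩ := ({n ∈ range m | W n ≤ v}).exists_max_image id
      ⟨n₀, mem_filter.2 ⟨mem_range.2 hn₀, hv.1⟩⟩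
    simp only [mem_filter, mem_range, id] at hc hmax
    have habove : ∀ n, c < n → n ≤ c + m → v < W n := by
      intro n hcn hn
      rcases lt_or_ge n m with h | h
      · by_contra hle
        have := hmax n ⟨h, by omega⟩
        omega
      · have := hper (n - m)
        rw [Nat.sub_add_cancel h] at this
        linarith [hge (n - m)]
    have hWc : W c = v := by
      have := hstep c
      have := habove (c + 1) (by omega) (by omega)
      omega
    refine ⟨c, mem_filter.2 ⟨mem_range.2 hc.1, fun r hr => ?_⟩, hWc⟩
    rw [mem_Icc] at hr
    rw [hWc]
    exact habove _ (by omega) (by omega)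

namespace RiskProcess

open Fin.NatCast

variable {m : ℕ}

def partialSum (y : Fin m → ℕ) (s : ℕ) : ℕ := ∑ i : Fin m, if (i : ℕ) < s then y i else 0

def Survives (u : ℕ) (y : Fin m → ℕ) : Prop := ∀ s ∈ Icc 1 m, partialSum y s < u + s

instance (u : ℕ) : DecidablePred (Survives (m := m) u) := fun _ => decidableDforallFinset

def RuinedLastAt (u σ : ℕ) (y : Fin m → ℕ) : Prop :=
  partialSum y σ = u + σ ∧ ∀ s ∈ Ioc σ m, partialSum y s < u + s

instance (u σ : ℕ) : DecidablePred (RuinedLastAt (m := m) u σ) := fun _ => instDecidableAnd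

lemma partialSum_mono (y : Fin m → ℕ) : Monotone (partialSum y) := fun _ _ h =>
  sum_le_sum fun i _ => by split_ifs <;> omega

lemma partialSum_of_le (y : Fin m → ℕ) {s : ℕ} (hs : m ≤ s) : partialSum y s = ∑ i, y i :=
  sum_congr rfl fun i _ => if_pos (i.2.trans_le hs)

lemma partialSum_comp_val (f : ℕ → ℕ) {s : ℕ} (hs : s ≤ m) :
    partialSum (fun i : Fin m => f i) s = ∑ i ∈ range s, f i := by
  rw [partialSum, Fin.sum_univ_eq_sum_range (fun n => if n < s then f n else 0), ← sum_filter]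
  congr 1
  ext n
  simp only [mem_filter, mem_range]
  omega

lemma partialSum_append {σ : ℕ} (a : Fin σ → ℕ) (b : Fin m → ℕ) (r : ℕ) :
    partialSum (Fin.append a b) (σ + r) = ∑ i, a i + partialSum b r := by
  simp only [partialSum, Fin.sum_univ_add, Fin.append_left, Fin.append_right, Fin.val_castAdd,
    Fin.val_natAdd, add_lt_add_iff_left]
  congr 1
  exact sum_congr rfl fun i _ => if_pos (by omega)

section Rotation

variable [NeZero m]

def rotate (y : Fin m → ℕ) (c : ℕ) : Fin m → ℕ := fun i => y (i + c)

/-- The index `i : ℕ` is read mod `m`: these are the partial sums of the periodic extension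
of `y`. -/
def cumSum (y : Fin m → ℕ) (n : ℕ) : ℕ := ∑ i ∈ range n, y i

lemma cumSum_add_partialSum_rotate (y : Fin m → ℕ) (c : ℕ) {r : ℕ} (hr : r ≤ m) :
    cumSum y (c + r) = cumSum y c + partialSum (rotate y c) r := by
  have hrot : rotate y c = fun i : Fin m => y (((i : ℕ) : Fin m) + c) := by
    funext i
    simp [rotate]
  rw [cumSum, sum_range_add, hrot, partialSum_comp_val (fun n => y ((n : Fin m) + c)) hr, cumSum]
  simp [add_comm]

lemma cumSum_add_period (y : Fin m → ℕ) (n : ℕ) :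
    cumSum y (n + m) = cumSum y n + ∑ i, y i := by
  rw [cumSum_add_partialSum_rotate y n le_rfl, partialSum_of_le _ le_rfl]
  exact congrArg _ (Equiv.sum_comp (Equiv.addRight (n : Fin m)) y)

lemma card_survives_rotate (y : Fin m → ℕ) (hy : ∑ i, y i ≤ m) :
    #{c ∈ range m | Survives 0 (rotate y c)} = m - ∑ i, y i := by
  set W : ℕ → ℤ := fun n => n - cumSum y n
  have hstep : ∀ n, W (n + 1) ≤ W n + 1 := fun n => by
    simp only [W, cumSum, sum_range_succ]
    push_cast
    omega
  have hper : ∀ n, W (n + m) = W n + (m - ∑ i, y i : ℕ) := fun n => by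
    simp only [W, cumSum_add_period]
    push_cast [hy]
    ring
  rw [← cycle_lemma (NeZero.pos m) hstep hper]
  refine congrArg card (filter_congr fun c _ => forall₂_congr fun r hr => ?_)
  have := cumSum_add_partialSum_rotate y c (mem_Icc.1 hr).2
  simp only [W]
  omega

end Rotation

def tuplesSumLt (t N : ℕ) : Finset (Fin t → ℕ) := (range N).biUnion (Nat.antidiagonalTuple t)

lemma mem_tuplesSumLt {t N : ℕ} {y : Fin t → ℕ} : y ∈ tuplesSumLt t N ↔ ∑ i, y i < N := by
  simp [tuplesSumLt, Nat.mem_antidiagonalTuple]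

lemma sum_tuplesSumLt {M : Type*} [AddCommMonoid M] (t N : ℕ) (f : (Fin t → ℕ) → M) :
    ∑ y ∈ tuplesSumLt t N, f y = ∑ j ∈ range N, ∑ y ∈ Nat.antidiagonalTuple t j, f y :=
  sum_biUnion fun _ _ _ _ hne => disjoint_left.2 fun _ hj hj' =>
    hne ((Nat.mem_antidiagonalTuple.1 hj).symm.trans (Nat.mem_antidiagonalTuple.1 hj'))

lemma sum_antidiagonalTuple_comp_perm {M : Type*} [AddCommMonoid M] {k : ℕ}
    (e : Equiv.Perm (Fin m)) (f : (Fin m → ℕ) → M) :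
    ∑ y ∈ Nat.antidiagonalTuple m k, f (y ∘ e) = ∑ y ∈ Nat.antidiagonalTuple m k, f y :=
  sum_equiv (e.symm.arrowCongr (Equiv.refl ℕ))
    (fun y => by
      rw [Nat.mem_antidiagonalTuple, Nat.mem_antidiagonalTuple, ← Equiv.sum_comp e y]
      rfl)
    (fun _ _ => rfl)

/-- The capital `u + s - S_s` rises by at most one per step, so it is exactly `0` at the last
ruin. -/
lemma not_survives_iff {u : ℕ} {y : Fin m → ℕ} (hy : ∑ i, y i < u + m) :
    ¬ Survives u y ↔ ∃ σ ∈ Ico 1 m, RuinedLastAt u σ y := by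
  constructor
  · intro hy'
    simp only [Survives, not_forall, not_lt] at hy'
    obtain ⟨s₀, hs₀, hs₀'⟩ := hy'
    obtain ⟨σ, hσ, hmax⟩ := ({s ∈ Icc 1 m | u + s ≤ partialSum y s}).exists_max_image id
      ⟨s₀, mem_filter.2 ⟨hs₀, hs₀'⟩⟩
    simp only [mem_filter, mem_Icc, id] at hσ hmax
    have hσm : σ < m := by
      by_contra h
      rw [partialSum_of_le y (by omega)] at hσ
      omega
    have hafter : ∀ s ∈ Ioc σ m, partialSum y s < u + s := fun s hs => by
      rw [mem_Ioc] at hs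
      by_contra h
      have := hmax s ⟨⟨by omega, hs.2⟩, by omega⟩
      omega
    have hσ1 := hafter (σ + 1) (mem_Ioc.2 ⟨by omega, by omega⟩)
    have := partialSum_mono y (Nat.le_add_right σ 1)
    exact ⟨σ, mem_Ico.2 ⟨hσ.1.1, hσm⟩, by omega, hafter⟩
  · rintro ⟨σ, hσ, hσ', -⟩ hsurv
    have := hsurv σ (mem_Icc.2 ⟨(mem_Ico.1 hσ).1, (mem_Ico.1 hσ).2.le⟩)
    omega

lemma RuinedLastAt.le {u σ σ' : ℕ} {y : Fin m → ℕ} (h : RuinedLastAt u σ y)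
    (h' : RuinedLastAt u σ' y) (hσ' : σ' ≤ m) : σ' ≤ σ := by
  by_contra hlt
  have := h.2 σ' (mem_Ioc.2 ⟨by omega, hσ'⟩)
  have := h'.1
  omega

lemma ruinedLastAt_append_iff {u σ : ℕ} (a : Fin σ → ℕ) (b : Fin m → ℕ) :
    RuinedLastAt u σ (Fin.append a b) ↔ ∑ i, a i = u + σ ∧ Survives 0 b := by
  have h0 : partialSum (Fin.append a b) σ = ∑ i, a i := by
    simpa [partialSum] using partialSum_append a b 0
  rw [RuinedLastAt, h0]
  refine and_congr_right fun ha => ⟨fun h r hr => ?_, fun h s hs => ?_⟩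
  · have := h (σ + r) (by simp at hr ⊢; omega)
    rw [partialSum_append] at this
    omega
  · obtain ⟨r, rfl⟩ : ∃ r, s = σ + r := ⟨s - σ, by simp at hs; omega⟩
    have := h r (by simp at hs ⊢; omega)
    rw [partialSum_append]
    omega

section Weights

variable {R : Type*} [CommSemiring R] (q : ℕ → R)

def tupleWeight (y : Fin m → ℕ) : R := ∏ i, q (y i)

def convPower (m j : ℕ) : R := ∑ y ∈ Nat.antidiagonalTuple m j, tupleWeight q y

lemma tupleWeight_comp_perm (y : Fin m → ℕ) (e : Equiv.Perm (Fin m)) :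
    tupleWeight q (y ∘ e) = tupleWeight q y :=
  Equiv.prod_comp e fun i => q (y i)

lemma tupleWeight_append {σ : ℕ} (a : Fin σ → ℕ) (b : Fin m → ℕ) :
    tupleWeight q (Fin.append a b) = tupleWeight q a * tupleWeight q b := by
  simp [tupleWeight, Fin.prod_univ_add]

/-- Hitting-time theorem. Summing over the `m` rotations counts each tuple of sum `k` exactly
`m - k` times (cycle lemma), and rotations preserve weights. -/
theorem mul_sum_survives_zero [NeZero m] {k : ℕ} (hk : k ≤ m) :
    (m : R) * ∑ y ∈ Nat.antidiagonalTuple m k with Survives 0 y, tupleWeight q y =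
      (m - k : ℕ) * convPower q m k := by
  set T := Nat.antidiagonalTuple m k
  have hrot : ∀ c : ℕ, ∑ y ∈ T with Survives 0 (rotate y c), tupleWeight q y =
      ∑ y ∈ T with Survives 0 y, tupleWeight q y := fun c => by
    simp only [sum_filter]
    refine (sum_congr rfl fun y _ => ?_).trans
      (sum_antidiagonalTuple_comp_perm (Equiv.addRight (c : Fin m)) _)
    simp only [tupleWeight_comp_perm]
    rfl
  calc (m : R) * ∑ y ∈ T with Survives 0 y, tupleWeight q y
      = ∑ c ∈ range m, ∑ y ∈ T with Survives 0 (rotate y c), tupleWeight q y := by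
        simp [hrot]
    _ = ∑ y ∈ T, (#{c ∈ range m | Survives 0 (rotate y c)} : R) * tupleWeight q y := by
        simp only [sum_filter]
        rw [sum_comm]
        refine sum_congr rfl fun y _ => ?_
        rw [← sum_filter, sum_const, nsmul_eq_mul]
    _ = (m - k : ℕ) * convPower q m k := by
        rw [convPower, mul_sum]
        refine sum_congr rfl fun y hy => ?_
        rw [Nat.mem_antidiagonalTuple] at hy
        rw [card_survives_rotate y (hy.le.trans hk), hy]

lemma sum_ruinedLastAt {u σ t : ℕ} (h : σ + m = t) :
    ∑ y ∈ tuplesSumLt t (u + t) with RuinedLastAt u σ y, tupleWeight q y =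
      convPower q σ (u + σ) * ∑ b ∈ tuplesSumLt m m with Survives 0 b, tupleWeight q b := by
  subst h
  have hset : {y ∈ tuplesSumLt (σ + m) (u + (σ + m)) | RuinedLastAt u σ y} =
      (Nat.antidiagonalTuple σ (u + σ) ×ˢ {b ∈ tuplesSumLt m m | Survives 0 b}).map
        (Fin.appendEquiv σ m).toEmbedding := by
    ext y
    obtain ⟨⟨a, b⟩, rfl⟩ := (Fin.appendEquiv σ m).surjective y
    rw [mem_map_equiv, Equiv.symm_apply_apply]
    change Fin.append a b ∈ _ ↔ _
    simp only [mem_filter, mem_product, mem_tuplesSumLt, Nat.mem_antidiagonalTuple,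
      Fin.sum_univ_add, Fin.append_left, Fin.append_right, ruinedLastAt_append_iff]
    constructor
    · rintro ⟨hlt, ha, hb⟩
      exact ⟨ha, by omega, hb⟩
    · rintro ⟨ha, hlt, hb⟩
      exact ⟨by omega, ha, hb⟩
  rw [hset, sum_map, sum_product, convPower, sum_mul_sum]
  exact sum_congr rfl fun a _ => sum_congr rfl fun b _ => tupleWeight_append q a b

end Weights

theorem sum_survives_eq {R : Type*} [CommRing R] (q : ℕ → R) (u t : ℕ) :
    ∑ y ∈ tuplesSumLt t (u + t) with Survives u y, tupleWeight q y =
      ∑ j ∈ range (u + t), convPower q t j - ∑ σ ∈ Ico 1 t, convPower q σ (u + σ) *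
        ∑ b ∈ tuplesSumLt (t - σ) (t - σ) with Survives 0 b, tupleWeight q b := by
  set L := tuplesSumLt t (u + t)
  have hruin : {y ∈ L | ¬ Survives u y} =
      (Ico 1 t).biUnion fun σ => {y ∈ L | RuinedLastAt u σ y} := by
    ext y
    simp only [mem_filter, mem_biUnion]
    constructor
    · rintro ⟨hy, hns⟩
      obtain ⟨σ, hσ, h⟩ := (not_survives_iff (mem_tuplesSumLt.1 hy)).1 hns
      exact ⟨σ, hσ, hy, h⟩
    · rintro ⟨σ, hσ, hy, h⟩
      exact ⟨hy, (not_survives_iff (mem_tuplesSumLt.1 hy)).2 ⟨σ, hσ, h⟩⟩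
  have hdisj : (Ico 1 t : Set ℕ).PairwiseDisjoint fun σ => {y ∈ L | RuinedLastAt u σ y} := by
    intro σ hσ σ' hσ' hne
    refine disjoint_left.2 fun y hy hy' => hne ?_
    simp only [coe_Ico, Set.mem_Ico] at hσ hσ'
    exact le_antisymm ((mem_filter.1 hy').2.le (mem_filter.1 hy).2 hσ.2.le)
      ((mem_filter.1 hy).2.le (mem_filter.1 hy').2 hσ'.2.le)
  have hlast : ∀ σ ∈ Ico 1 t, ∑ y ∈ L with RuinedLastAt u σ y, tupleWeight q y =
      convPower q σ (u + σ) * ∑ b ∈ tuplesSumLt (t - σ) (t - σ) with Survives 0 b,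
        tupleWeight q b := fun σ hσ =>
    sum_ruinedLastAt q (by simp at hσ; omega)
  rw [eq_sub_iff_add_eq, ← sum_congr rfl hlast, ← sum_biUnion hdisj, ← hruin,
    sum_filter_add_sum_filter_not, sum_tuplesSumLt]
  rfl

section Field

variable {K : Type*} [Field K] [CharZero K] (q : ℕ → K)

lemma sum_survives_zero [NeZero m] :
    ∑ b ∈ tuplesSumLt m m with Survives 0 b, tupleWeight q b =
      ∑ k ∈ range m, ((m - k : ℕ) : K) / m * convPower q m k := by
  rw [sum_filter, sum_tuplesSumLt]
  refine sum_congr rfl fun k hk => ?_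
  rw [← sum_filter, div_mul_eq_mul_div, eq_div_iff (by simp [NeZero.ne m]), mul_comm,
    mul_sum_survives_zero q (mem_range.1 hk).le]

theorem sum_survives_eq_seal (u t : ℕ) :
    ∑ y ∈ tuplesSumLt t (u + t) with Survives u y, tupleWeight q y =
      ∑ j ∈ range (u + t), convPower q t j -
        ∑ j ∈ Icc (u + 1) (u + t - 1), convPower q (j - u) j * ∑ n ∈ Icc j (u + t - 1),
          (((t + u - n : ℕ) : K) / ((t + u - j : ℕ) : K)) * convPower q (t + u - j) (n - j) := by
  rw [sum_survives_eq]
  congr 1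
  refine sum_nbij' (u + ·) (· - u) ?_ ?_ ?_ ?_ fun σ hσ => ?_
  any_goals intro x hx; simp only [mem_Ico, mem_Icc] at hx ⊢; omega
  rw [mem_Ico] at hσ
  have : NeZero (t - σ) := ⟨by omega⟩
  rw [sum_survives_zero, add_tsub_cancel_left, show t + u - (u + σ) = t - σ by omega]
  congr 1
  refine sum_nbij' (u + σ + ·) (· - (u + σ)) ?_ ?_ ?_ ?_ fun k hk => ?_
  any_goals intro x hx; simp only [mem_range, mem_Icc] at hx ⊢; omega
  rw [mem_range] at hk
  congr 3 <;> omega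

end Field

end RiskProcess

open RiskProcess

lemma aggClaims_eq_partialSum {Ω : Type*} (Y : ℕ → Ω → ℕ) {s t : ℕ} (hs : s ≤ t) (ω : Ω) :
    aggClaims Y s ω = partialSum (fun i : Fin t => Y i ω) s :=
  (partialSum_comp_val (fun n => Y n ω) hs).symm

lemma le_ruinTime_iff {Ω : Type*} (Y : ℕ → Ω → ℕ) (u : ℤ) (t : ℕ) (ω : Ω) :
    ((t + 1 : ℕ) : ℕ∞) ≤ ruinTime Y u ω ↔ ∀ s ∈ Icc 1 t, 0 < riskProc Y u s ω := by
  simp only [ruinTime, le_sInf_iff, Set.forall_mem_image, Set.mem_ofPred_eq, Nat.cast_le,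
    mem_Icc]
  constructor
  · intro h s hs
    by_contra hle
    have := h ⟨hs.1, not_lt.1 hle⟩
    omega
  · intro h s hs
    by_contra hlt
    have := h s ⟨hs.1, by omega⟩
    omega

lemma le_ruinTime_iff_survives {Ω : Type*} (Y : ℕ → Ω → ℕ) (u : ℕ) {t : ℕ} (ht : 1 ≤ t)
    (ω : Ω) :
    ((t + 1 : ℕ) : ℕ∞) ≤ ruinTime Y u ω ↔
      (fun i : Fin t => Y i ω) ∈ {y ∈ tuplesSumLt t (u + t) | Survives u y} := by
  have hsurv : (∀ s ∈ Icc 1 t, 0 < riskProc Y u s ω) ↔ Survives u fun i : Fin t => Y i ω :=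
    forall₂_congr fun s hs => by
      rw [riskProc, ← aggClaims_eq_partialSum Y (mem_Icc.1 hs).2]
      omega
  rw [le_ruinTime_iff, hsurv, mem_filter, mem_tuplesSumLt, iff_and_self]
  intro h
  simpa [partialSum_of_le] using h t (mem_Icc.2 ⟨ht, le_rfl⟩)

section Probability

variable [IsProbabilityMeasure (ℙ : Measure Ω)] {Y : ℕ → Ω → ℕ}

lemma measure_tuple_mem_toReal (hY : ∀ i, Measurable (Y i)) (hindep : iIndepFun Y ℙ)
    (hid : ∀ i, IdentDistrib (Y i) (Y 0) ℙ ℙ) {m : ℕ} (F : Finset (Fin m → ℕ)) :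
    (ℙ {ω | (fun i : Fin m => Y i ω) ∈ F}).toReal =
      ∑ z ∈ F, tupleWeight (fun c => (ℙ {ω | Y 0 ω = c}).toReal) z := by
  have hmeas : Measurable fun ω (i : Fin m) => Y i ω := measurable_pi_lambda _ fun i => hY i
  have hatom : ∀ z : Fin m → ℕ,
      ℙ ((fun ω (i : Fin m) => Y i ω) ⁻¹' {z}) = ∏ i, ℙ {ω | Y 0 ω = z i} := fun z => by
    have hset : (fun ω (i : Fin m) => Y i ω) ⁻¹' {z} =
        ⋂ i ∈ (univ : Finset (Fin m)), Y i ⁻¹' {z i} := by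
      ext ω
      simp [funext_iff]
    rw [hset, (hindep.precomp Fin.val_injective).measure_inter_preimage_eq_mul _
      fun _ _ => measurableSet_singleton _]
    exact prod_congr rfl fun i _ => (hid i).measure_mem_eq (measurableSet_singleton _)
  change (ℙ ((fun ω (i : Fin m) => Y i ω) ⁻¹' (F : Set (Fin m → ℕ)))).toReal = _
  rw [← sum_measure_preimage_singleton F fun z _ => hmeas (measurableSet_singleton z),
    ENNReal.toReal_sum fun z _ => measure_ne_top _ _]
  exact sum_congr rfl fun z _ => by rw [hatom, ENNReal.toReal_prod]; rfl

lemma conv_eq_convPower (hY : ∀ i, Measurable (Y i)) (hindep : iIndepFun Y ℙ)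
    (hid : ∀ i, IdentDistrib (Y i) (Y 0) ℙ ℙ) (m j : ℕ) :
    conv Y m j = convPower (fun c => (ℙ {ω | Y 0 ω = c}).toReal) m j := by
  have hset : {ω | aggClaims Y m ω = j} =
      {ω | (fun i : Fin m => Y i ω) ∈ Nat.antidiagonalTuple m j} := by
    ext ω
    simp [aggClaims, Nat.mem_antidiagonalTuple, Fin.sum_univ_eq_sum_range (fun n => Y n ω)]
  rw [conv, hset, measure_tuple_mem_toReal hY hindep hid, convPower]

end Probability

theorem seal_formula_general
    [IsProbabilityMeasure (ℙ : Measure Ω)]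
    (Y : ℕ → Ω → ℕ) (hY : ∀ i, Measurable (Y i))
    (hindep : iIndepFun Y ℙ)
    (hid : ∀ i, IdentDistrib (Y i) (Y 0) ℙ ℙ)
    (u : ℕ) (t : ℕ) (ht : 1 ≤ t) :
    (ℙ {ω | ((t + 1 : ℕ) : ℕ∞) ≤ ruinTime Y (u : ℤ) ω}).toReal =
      (∑ j ∈ Finset.range (u + t), conv Y t j) -
      ∑ j ∈ Finset.Icc (u + 1) (u + t - 1),
        conv Y (j - u) j *
          (∑ n ∈ Finset.Icc j (u + t - 1),
            (((t + u - n : ℕ) : ℝ) / ((t + u - j : ℕ) : ℝ)) * conv Y (t + u - j) (n - j)) := by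
  simp_rw [le_ruinTime_iff_survives Y u ht, measure_tuple_mem_toReal hY hindep hid,
    sum_survives_eq_seal, conv_eq_convPower hY hindep hid]

/-- Seal-type formula for the finite-time survival probability. -/
theorem seal_formula
    [IsProbabilityMeasure (ℙ : Measure Ω)]
    (Y : ℕ → Ω → ℕ) (hY : ∀ i, Measurable (Y i))
    (hindep : iIndepFun Y ℙ)
    (hid : ∀ i, IdentDistrib (Y i) (Y 0) ℙ ℙ)
    (u : ℕ) (hu : 1 ≤ u) (t : ℕ) (ht : 1 ≤ t) :
    (ℙ {ω | ((t + 1 : ℕ) : ℕ∞) ≤ ruinTime Y (u : ℤ) ω}).toReal =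
      (∑ j ∈ Finset.range (u + t), conv Y t j) -
      ∑ j ∈ Finset.Icc (u + 1) (u + t - 1),
        conv Y (j - u) j *
          (∑ n ∈ Finset.Icc j (u + t - 1),
            (((t + u - n : ℕ) : ℝ) / ((t + u - j : ℕ) : ℝ)) * conv Y (t + u - j) (n - j)) :=
  seal_formula_general Y hY hindep hid u t ht

end
end

section
/- (Recursive representation of finite-time Parisian ruin) For u ≥ 1, ζ ≥ 1 and t ≥ ζ + 2: P_u(τ^ζ ≥ t) = P_u(T_0 ≥ t − ζ) + Σ_{s=1}^{t−ζ−1} Σ_{ω=1}^{ζ} Σ_{z=0}^{ω−1} P_u(T_0 = s, −R_{T_0} = z) · P(τ_{z+1} = ω) · P_1(τ^ζ ≥ t − ω − s), where P(τ_{z+1} = ω) = ((z+1)/ω) p^{*ω}_{ω−z−1} is the law of the first passage of the walk from 0 to level z+1. -/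
open MeasureTheory ProbabilityTheory Filter
open scoped ENNReal

noncomputable section

variable {Ω : Type*} [MeasureSpace Ω]

/-- Last time strictly before `n` at which the risk process was strictly positive. -/
def lastUp (Y : ℕ → Ω → ℕ) (u : ℤ) (n : ℕ) (ω : Ω) : ℕ :=
  sSup {s : ℕ | s < n ∧ 0 < riskProc Y u s ω}

/-- Parisian ruin time with delay `ζ`. -/
def parisian (Y : ℕ → Ω → ℕ) (u : ℤ) (ζ : ℕ) (ω : Ω) : ℕ∞ :=
  sInf ((fun n : ℕ => (n : ℕ∞)) ''
    {n : ℕ | ζ < n - lastUp Y u n ω ∧ riskProc Y u n ω ≤ 0})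

/-!
The events involved depend on finitely many claims, so everything is transferred to the path
space `ℕ → ℕ` with the product law `infinitePi μ` of the claim distribution `μ`. A path that
survives in the Parisian sense either avoids classical ruin before `t - ζ`, or it is ruined
first at some `s` with deficit `z` and recovers after `w ≤ ζ` steps; since upward steps have size
one, it is then back at exactly `1`, and from there it must survive in the Parisian sense again.
These cases are disjoint, and independence of disjoint blocks of claims together with shift
invariance of `infinitePi μ` factors each of them into a ruin term, a first-passage term and a
Parisian term started from `1`. The first-passage term is Kendall's identity: the `w` cyclic
rotations of the first `w` claims have the same law, and by the cycle lemma exactly `z + 1` of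
them are first passages to level `z + 1` when `S_w = w - (z + 1)`.
-/

open Finset

section IidSequence

variable {ι α : Type*}

lemma DependsOn.mem_image_restrict_iff {P : (ι → α) → Prop} {s : Finset ι}
    (hP : DependsOn P s) (y : ι → α) : s.restrict y ∈ s.restrict '' {x | P x} ↔ P y := by
  refine ⟨?_, fun h => ⟨y, h, rfl⟩⟩
  rintro ⟨x, hx, hxy⟩
  rwa [← hP fun i hi => congrFun hxy ⟨i, hi⟩]

lemma DependsOn.comp_left [DecidableEq ι] {P : (ι → α) → Prop} {s : Finset ι}
    (hP : DependsOn P s) (f : ι → ι) :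
    DependsOn (fun y : ι → α => P (fun i => y (f i))) (s.image f) :=
  fun _ _ h => hP fun i hi => h (f i) (by simpa using ⟨i, hi, rfl⟩)

lemma DependsOn.and [DecidableEq ι] {P Q : (ι → α) → Prop} {s t : Finset ι}
    (hP : DependsOn P s) (hQ : DependsOn Q t) :
    DependsOn (fun y => P y ∧ Q y) (s ∪ t : Finset ι) := fun _ _ h => by
  simp only [Finset.coe_union, Set.mem_union] at h
  dsimp only
  rw [hP fun i hi => h i (Or.inl hi), hQ fun i hi => h i (Or.inr hi)]

variable [MeasurableSpace α] {μ : Measure α} [IsProbabilityMeasure μ]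

lemma map_infinitePi_comp_eq_pi {κ : Type*} [Fintype κ] {g : κ → ι} (hg : g.Injective) :
    (Measure.infinitePi fun _ : ι => μ).map (fun y k => y (g k)) =
      Measure.pi fun _ : κ => μ := by
  rw [Measure.map_infinitePi_infinitePi_of_inj hg, Measure.infinitePi_eq_pi]

variable [MeasurableSingletonClass α] [Countable α]

lemma DependsOn.measurableSet_setOf {P : (ι → α) → Prop} {s : Finset ι}
    (hP : DependsOn P s) : MeasurableSet {y | P y} := by
  have : {y | P y} = s.restrict ⁻¹' (s.restrict '' {y | P y}) :=
    Set.ext fun y => (hP.mem_image_restrict_iff y).symm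
  rw [this]
  exact Finset.measurable_restrict s (Set.to_countable _).measurableSet

lemma infinitePi_setOf_comp_eq {P : (ι → α) → Prop} {s : Finset ι} (hP : DependsOn P s)
    {f : ι → ι} (hf : Set.InjOn f s) :
    Measure.infinitePi (fun _ : ι => μ) {y | P (fun i => y (f i))} =
      Measure.infinitePi (fun _ : ι => μ) {y | P y} := by
  set E := s.restrict '' {y | P y}
  have hE : MeasurableSet E := (Set.to_countable _).measurableSet
  have key : ∀ g : s → ι, g.Injective → ∀ Q : (ι → α) → Prop,
      (∀ y, Q y ↔ (fun i : s => y (g i)) ∈ E) →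
      Measure.infinitePi (fun _ : ι => μ) {y | Q y} = Measure.pi (fun _ : s => μ) E := by
    intro g hg Q hQ
    rw [← map_infinitePi_comp_eq_pi hg, Measure.map_apply (by fun_prop) hE]
    exact congrArg _ (Set.ext hQ)
  rw [key (fun i => f i) (fun i j h => Subtype.ext (hf i.2 j.2 h)) _
      fun y => (hP.mem_image_restrict_iff _).symm,
    key Subtype.val Subtype.val_injective _ fun y => (hP.mem_image_restrict_iff y).symm]

lemma infinitePi_setOf_and {P Q : (ι → α) → Prop} {s t : Finset ι} (hst : Disjoint s t)
    (hP : DependsOn P s) (hQ : DependsOn Q t) :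
    Measure.infinitePi (fun _ : ι => μ) {y | P y ∧ Q y} =
      Measure.infinitePi (fun _ : ι => μ) {y | P y} *
        Measure.infinitePi (fun _ : ι => μ) {y | Q y} := by
  have hind := (iIndepFun_infinitePi (P := fun _ : ι => μ) (X := fun _ => id)
    fun _ => measurable_id).indepFun_finset s t hst fun i => measurable_pi_apply i
  have h := hind.measure_inter_preimage_eq_mul _ _
    (Set.to_countable (s.restrict '' {y | P y})).measurableSet
    (Set.to_countable (t.restrict '' {y | Q y})).measurableSet
  convert h using 2
  · ext y
    exact and_congr (hP.mem_image_restrict_iff y).symm (hQ.mem_image_restrict_iff y).symm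
  · exact congrArg _ (Set.ext fun y => (hP.mem_image_restrict_iff y).symm)
  · exact congrArg _ (Set.ext fun y => (hQ.mem_image_restrict_iff y).symm)

lemma infinitePi_setOf_and_shift {P Q : (ℕ → α) → Prop} {a : ℕ} {s : Finset ℕ}
    (hP : DependsOn P (Finset.range a)) (hQ : DependsOn Q s) :
    Measure.infinitePi (fun _ : ℕ => μ) {y | P y ∧ Q (fun i => y (a + i))} =
      Measure.infinitePi (fun _ : ℕ => μ) {y | P y} *
        Measure.infinitePi (fun _ : ℕ => μ) {y | Q y} := by
  have hdisj : Disjoint (Finset.range a) (s.image (a + ·)) :=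
    Finset.disjoint_left.2 fun i hi hi' => by simp at hi hi'; omega
  rw [infinitePi_setOf_and hdisj hP (hQ.comp_left _),
    infinitePi_setOf_comp_eq hQ (add_right_injective a).injOn]

end IidSequence

section Records

variable {g : ℕ → ℤ}

lemma partialSups_lt_iff_forall_lt {n : ℕ} {a : ℤ} :
    partialSups g n < a ↔ ∀ i ≤ n, g i < a := by
  simp [partialSups_apply, Finset.sup'_lt_iff]

lemma partialSups_succ_of_step_le (hg : ∀ n, g (n + 1) ≤ g n + 1) (n : ℕ) :
    partialSups g (n + 1) = partialSups g n + if partialSups g n < g (n + 1) then 1 else 0 := by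
  have hle : g n ≤ partialSups g n := le_partialSups g n
  have := hg n
  rw [← Order.succ_eq_add_one, partialSups_succ, Order.succ_eq_add_one]
  split_ifs with h
  · rw [sup_eq_right.2 h.le]; omega
  · rw [sup_eq_left.2 (not_lt.1 h), add_zero]

lemma partialSups_add_period {w : ℕ} {k : ℤ} (hk : 0 ≤ k) (hper : ∀ n, g (n + w) = g n + k)
    {n : ℕ} (hn : w ≤ n + 1) : partialSups g (n + w) = partialSups g n + k := by
  refine le_antisymm (partialSups_le _ _ _ fun i hi => ?_) ?_
  · rcases lt_or_ge i w with hiw | hiw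
    · have := le_partialSups_of_le g (show i ≤ n by omega); omega
    · have := le_partialSups_of_le g (show i - w ≤ n by omega)
      have := hper (i - w)
      rw [Nat.sub_add_cancel hiw] at this
      omega
  · rw [← le_sub_iff_add_le]
    refine partialSups_le _ _ _ fun i hi => ?_
    have := le_partialSups_of_le g (show i + w ≤ n + w by omega)
    have := hper i
    omega

/-- Upward steps have size at most one, so the running maximum grows by exactly one at each strict
record and the number of records in a period telescopes to the drift `k`. -/
lemma card_filter_isRecord {w : ℕ} {k : ℕ} (hw : 0 < w) (hg : ∀ n, g (n + 1) ≤ g n + 1)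
    (hper : ∀ n, g (n + w) = g n + k) :
    #{j ∈ Finset.range w | ∀ i < w + j, g i < g (w + j)} = k := by
  have hstep : ∀ j, ((if ∀ i < w + j, g i < g (w + j) then 1 else 0 : ℕ) : ℤ) =
      partialSups g (w - 1 + (j + 1)) - partialSups g (w - 1 + j) := by
    intro j
    have e : w - 1 + (j + 1) = w - 1 + j + 1 := by omega
    rw [e, partialSups_succ_of_step_le hg, show w - 1 + j + 1 = w + j by omega]
    have : (∀ i < w + j, g i < g (w + j)) ↔ partialSups g (w - 1 + j) < g (w + j) := by
      rw [partialSups_lt_iff_forall_lt]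
      exact forall_congr' fun i => by constructor <;> intro h hi <;> exact h (by omega)
    split_ifs <;> simp_all
  have := Finset.sum_range_sub (fun j => partialSups g (w - 1 + j)) w
  simp only [← hstep, add_zero] at this
  rw [partialSups_add_period (Int.natCast_nonneg k) hper (by omega)] at this
  rw [Finset.card_filter]
  exact_mod_cast this.trans (add_sub_cancel_left _ _)

end Records

namespace ClaimPath

def riskPath (u : ℤ) (y : ℕ → ℕ) (n : ℕ) : ℤ := u + n - ∑ i ∈ Finset.range n, y i

def shift (k : ℕ) (y : ℕ → ℕ) : ℕ → ℕ := fun i => y (k + i)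

variable {u : ℤ} {y : ℕ → ℕ}

@[simp] lemma riskPath_zero (u : ℤ) (y : ℕ → ℕ) : riskPath u y 0 = u := by simp [riskPath]

lemma riskPath_succ (u : ℤ) (y : ℕ → ℕ) (n : ℕ) :
    riskPath u y (n + 1) = riskPath u y n + 1 - y n := by
  simp only [riskPath, Finset.sum_range_succ]; push_cast; ring

lemma riskPath_add (u : ℤ) (y : ℕ → ℕ) (k n : ℕ) :
    riskPath u y (k + n) = riskPath (riskPath u y k) (shift k y) n := by
  simp only [riskPath, shift, Finset.sum_range_add]; push_cast; ring

lemma riskPath_eq_add_riskPath_zero (u : ℤ) (y : ℕ → ℕ) (n : ℕ) :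
    riskPath u y n = u + riskPath 0 y n := by
  simp only [riskPath]; ring

lemma riskPath_succ_le (u : ℤ) (y : ℕ → ℕ) (n : ℕ) :
    riskPath u y (n + 1) ≤ riskPath u y n + 1 := by
  rw [riskPath_succ]; omega

lemma riskPath_add_le (u : ℤ) (y : ℕ → ℕ) (n k : ℕ) :
    riskPath u y (n + k) ≤ riskPath u y n + k := by
  induction k with
  | zero => simp
  | succ k ih => rw [← add_assoc]; have := riskPath_succ_le u y (n + k); push_cast; omega

lemma riskPath_congr {y' : ℕ → ℕ} {m n : ℕ} (h : ∀ i < m, y i = y' i) (hn : n ≤ m) :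
    riskPath u y n = riskPath u y' n := by
  unfold riskPath
  rw [Finset.sum_congr rfl fun i hi => h i (by simp at hi; omega)]

def NoRuinBefore (u : ℤ) (m : ℕ) (y : ℕ → ℕ) : Prop :=
  ∀ n, 1 ≤ n → n < m → 0 < riskPath u y n

/-- `T₀ = s` and `R_{T₀} = -z` (for `1 ≤ s`). -/
def RuinWithDeficit (u : ℤ) (s z : ℕ) (y : ℕ → ℕ) : Prop :=
  NoRuinBefore u s y ∧ riskPath u y s = -z

/-- `t ≤ τ^ζ`. -/
def ParisianSurvives (u : ℤ) (ζ t : ℕ) (y : ℕ → ℕ) : Prop :=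
  ∀ n < t, riskPath u y n ≤ 0 → ∃ s < n, 0 < riskPath u y s ∧ n ≤ s + ζ

/-- `τ_k = w` for the walk `riskPath 0 y`. -/
def FirstPassage (k w : ℕ) (y : ℕ → ℕ) : Prop :=
  riskPath 0 y w = k ∧ ∀ n < w, riskPath 0 y n < k

lemma dependsOn_noRuinBefore (u : ℤ) (m : ℕ) :
    DependsOn (NoRuinBefore u m) (Finset.range m : Set ℕ) := fun y y' h => by
  simp only [Finset.coe_range, Set.mem_Iio] at h
  unfold NoRuinBefore
  exact propext <| forall_congr' fun n => imp_congr_right fun _ => imp_congr_right fun hn => by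
    rw [riskPath_congr h hn.le]

lemma dependsOn_ruinWithDeficit (u : ℤ) (s z : ℕ) :
    DependsOn (RuinWithDeficit u s z) (Finset.range s : Set ℕ) := fun y y' h => by
  have h' := h
  simp only [Finset.coe_range, Set.mem_Iio] at h'
  unfold RuinWithDeficit
  rw [dependsOn_noRuinBefore u s h, riskPath_congr h' le_rfl]

lemma dependsOn_parisianSurvives (u : ℤ) (ζ t : ℕ) :
    DependsOn (ParisianSurvives u ζ t) (Finset.range t : Set ℕ) := fun y y' h => by
  simp only [Finset.coe_range, Set.mem_Iio] at h
  unfold ParisianSurvives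
  refine propext <| forall_congr' fun n => imp_congr_right fun hn => ?_
  rw [riskPath_congr h hn.le]
  exact imp_congr_right fun _ => exists_congr fun s => and_congr_right fun hs => by
    rw [riskPath_congr h (by omega)]

lemma dependsOn_firstPassage (k w : ℕ) :
    DependsOn (FirstPassage k w) (Finset.range w : Set ℕ) := fun y y' h => by
  simp only [Finset.coe_range, Set.mem_Iio] at h
  unfold FirstPassage
  rw [riskPath_congr h le_rfl]
  exact propext <| and_congr_right fun _ => forall_congr' fun n => imp_congr_right fun hn => by
    rw [riskPath_congr h hn.le]

lemma exists_ruinWithDeficit {m : ℕ} (h : ¬ NoRuinBefore u m y) :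
    ∃ s, 1 ≤ s ∧ s < m ∧ ∃ z : ℕ, RuinWithDeficit u s z y := by
  classical
  have hex : ∃ n, 1 ≤ n ∧ n < m ∧ riskPath u y n ≤ 0 := by
    simpa [NoRuinBefore] using h
  obtain ⟨hs1, hsm, hs⟩ := Nat.find_spec hex
  refine ⟨Nat.find hex, hs1, hsm, (-riskPath u y (Nat.find hex)).toNat, ?_, by omega⟩
  intro n hn1 hn
  by_contra hpos
  exact Nat.find_min hex hn ⟨hn1, by omega, by omega⟩

lemma RuinWithDeficit.unique {s s' z z' : ℕ} (hs : 1 ≤ s) (hs' : 1 ≤ s')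
    (h : RuinWithDeficit u s z y) (h' : RuinWithDeficit u s' z' y) : s = s' ∧ z = z' := by
  have hss : s = s' := by
    rcases lt_trichotomy s s' with hlt | heq | hgt
    · have := h'.1 s hs hlt; have := h.2; omega
    · exact heq
    · have := h.1 s' hs' hgt; have := h'.2; omega
  subst hss
  have := h.2.symm.trans h'.2
  omega

lemma FirstPassage.unique {k w w' : ℕ} (h : FirstPassage k w y) (h' : FirstPassage k w' y) :
    w = w' := by
  rcases lt_trichotomy w w' with hlt | heq | hgt
  · have := h'.2 w hlt; have := h.1; omega
  · exact heq
  · have := h.2 w' hgt; have := h'.1; omega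

lemma FirstPassage.le {k w : ℕ} (h : FirstPassage k w y) : k ≤ w := by
  have := riskPath_add_le 0 y 0 w
  simp only [zero_add, riskPath_zero, h.1] at this
  omega

lemma exists_firstPassage {k m : ℕ} (hk : 0 < k) (hm : (k : ℤ) ≤ riskPath 0 y m) :
    ∃ w ≤ m, FirstPassage k w y := by
  classical
  have hex : ∃ n, (k : ℤ) ≤ riskPath 0 y n := ⟨m, hm⟩
  set w := Nat.find hex
  have hw : (k : ℤ) ≤ riskPath 0 y w := Nat.find_spec hex
  have hbefore : ∀ n < w, riskPath 0 y n < k := fun n hn => not_le.mp (Nat.find_min hex hn)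
  obtain ⟨v, hv⟩ : ∃ v, w = v + 1 := Nat.exists_eq_succ_of_ne_zero fun h0 => by
    simp only [h0, riskPath_zero] at hw; omega
  have hstep := riskPath_succ_le 0 y v
  have hv' := hbefore v (by omega)
  exact ⟨w, Nat.find_min' hex hm, by rw [hv] at hw ⊢; omega, hbefore⟩

lemma ParisianSurvives.mono {ζ t t' : ℕ} (h : ParisianSurvives u ζ t y) (ht : t' ≤ t) :
    ParisianSurvives u ζ t' y :=
  fun n hn => h n (by omega)

lemma ParisianSurvives.exists_recovery {ζ t s : ℕ} (h : ParisianSurvives u ζ t y)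
    (hst : s + ζ < t) : ∃ i ≤ ζ, 0 < riskPath u y (s + i) := by
  by_contra! hneg
  obtain ⟨s', hs'n, hs'pos, hs'ζ⟩ := h (s + ζ) hst (hneg ζ le_rfl)
  have := hneg (s' - s) (by omega)
  rw [show s + (s' - s) = s' by omega] at this
  omega

lemma ParisianSurvives.restart {ζ t k : ℕ} (h : ParisianSurvives u ζ t y)
    (hk : 0 < riskPath u y k) :
    ParisianSurvives (riskPath u y k) ζ (t - k) (shift k y) := by
  intro n hn hR
  have hn0 : n ≠ 0 := by rintro rfl; rw [riskPath_zero] at hR; omega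
  rw [← riskPath_add] at hR
  obtain ⟨s, hsn, hspos, hsζ⟩ := h (k + n) (by omega) hR
  rcases lt_or_ge s k with hsk | hsk
  · exact ⟨0, by omega, by rwa [riskPath_zero], by omega⟩
  · refine ⟨s - k, by omega, ?_, by omega⟩
    rwa [← riskPath_add, show k + (s - k) = s by omega]

lemma ParisianSurvives.of_restart {ζ t k : ℕ} (h₁ : ParisianSurvives u ζ k y)
    (hk : 0 < riskPath u y k) (h₂ : ParisianSurvives (riskPath u y k) ζ (t - k) (shift k y)) :
    ParisianSurvives u ζ t y := by
  intro n hn hR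
  rcases lt_trichotomy n k with hnk | rfl | hkn
  · exact h₁ n hnk hR
  · omega
  · obtain ⟨s, hsn, hspos, hsζ⟩ := h₂ (n - k) (by omega) (by
      rwa [← riskPath_add, show k + (n - k) = n by omega])
    refine ⟨k + s, by omega, by rwa [riskPath_add], by omega⟩

lemma parisianSurvives_of_noRuinBefore {ζ m : ℕ} (hu : 0 < u) (h : NoRuinBefore u m y) :
    ParisianSurvives u ζ (m + ζ) y := by
  intro n hn hR
  have hn0 : n ≠ 0 := by rintro rfl; rw [riskPath_zero] at hR; omega
  have hmn : m ≤ n := by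
    by_contra! hnm
    have := h n (by omega) hnm; omega
  refine ⟨m - 1, by omega, ?_, by omega⟩
  rcases Nat.eq_zero_or_pos (m - 1) with h0 | h1
  · rwa [h0, riskPath_zero]
  · exact h _ h1 (by omega)

lemma shift_shift (s w : ℕ) (y : ℕ → ℕ) : shift w (shift s y) = shift (s + w) y := by
  funext i; simp only [shift, add_assoc]

lemma RuinWithDeficit.riskPath_add {s z : ℕ} (h : RuinWithDeficit u s z y) (n : ℕ) :
    riskPath u y (s + n) = riskPath 0 (shift s y) n - z := by
  rw [ClaimPath.riskPath_add, h.2, riskPath_eq_add_riskPath_zero]; ring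

lemma RuinWithDeficit.riskPath_recovery {s w z : ℕ} (h : RuinWithDeficit u s z y)
    (hfp : FirstPassage (z + 1) w (shift s y)) : riskPath u y (s + w) = 1 := by
  rw [h.riskPath_add, hfp.1]; push_cast; ring

/-- The event behind the `(s, w, z)` summand of the recursion. -/
def ParisianPiece (u : ℤ) (ζ t s w z : ℕ) (y : ℕ → ℕ) : Prop :=
  RuinWithDeficit u s z y ∧ FirstPassage (z + 1) w (shift s y) ∧
    ParisianSurvives 1 ζ (t - w - s) (shift w (shift s y))

variable {ζ t s w z : ℕ}

lemma ParisianPiece.parisianSurvives (hu : 0 < u) (hw : w ≤ ζ)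
    (h : ParisianPiece u ζ t s w z y) : ParisianSurvives u ζ t y := by
  have hrec := h.1.riskPath_recovery h.2.1
  refine ((parisianSurvives_of_noRuinBefore hu h.1.1).mono (by omega : s + w ≤ s + ζ)).of_restart
    (k := s + w) (by omega) ?_
  rw [hrec, ← shift_shift, show t - (s + w) = t - w - s by omega]
  exact h.2.2

lemma ParisianSurvives.exists_parisianPiece (h : ParisianSurvives u ζ t y)
    (hnr : ¬ NoRuinBefore u (t - ζ) y) :
    ∃ s ∈ Finset.Icc 1 (t - ζ - 1), ∃ w ∈ Finset.Icc 1 ζ, ∃ z ∈ Finset.range w,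
      ParisianPiece u ζ t s w z y := by
  obtain ⟨s, hs1, hst, z, hruin⟩ := exists_ruinWithDeficit hnr
  obtain ⟨i, hiζ, hi⟩ := h.exists_recovery (s := s) (by omega)
  rw [hruin.riskPath_add] at hi
  obtain ⟨w, hwi, hfp⟩ :=
    exists_firstPassage (y := shift s y) (k := z + 1) (m := i) (by omega) (by push_cast; omega)
  have hzw := hfp.le
  have hrec := hruin.riskPath_recovery hfp
  have hafter := h.restart (k := s + w) (by omega)
  rw [hrec, ← shift_shift, show t - (s + w) = t - w - s by omega] at hafter
  exact ⟨s, Finset.mem_Icc.2 ⟨hs1, by omega⟩, w, Finset.mem_Icc.2 ⟨by omega, by omega⟩, z,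
    Finset.mem_range.2 (by omega), hruin, hfp, hafter⟩

lemma ParisianPiece.unique {s' w' z' : ℕ} (hs : 1 ≤ s) (hs' : 1 ≤ s')
    (h : ParisianPiece u ζ t s w z y) (h' : ParisianPiece u ζ t s' w' z' y) :
    s = s' ∧ w = w' ∧ z = z' := by
  obtain ⟨rfl, rfl⟩ := h.1.unique hs hs' h'.1
  exact ⟨rfl, h.2.1.unique h'.2.1, rfl⟩

lemma ParisianPiece.not_noRuinBefore {m : ℕ} (hs : 1 ≤ s) (hsm : s < m)
    (h : ParisianPiece u ζ t s w z y) : ¬ NoRuinBefore u m y := fun hnr => by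
  have := hnr s hs hsm; have := h.1.2; omega

lemma measurable_shift (k : ℕ) : Measurable (shift k) :=
  measurable_pi_lambda _ fun _ => measurable_pi_apply _

lemma measurableSet_parisianPiece (u : ℤ) (ζ t s w z : ℕ) :
    MeasurableSet {y | ParisianPiece u ζ t s w z y} :=
  (dependsOn_ruinWithDeficit u s z).measurableSet_setOf.inter <|
    ((dependsOn_firstPassage _ w).measurableSet_setOf.preimage (measurable_shift s)).inter <|
      (dependsOn_parisianSurvives 1 ζ _).measurableSet_setOf.preimage
        ((measurable_shift w).comp (measurable_shift s))

lemma setOf_parisianSurvives (hu : 0 < u) :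
    {y | ParisianSurvives u ζ t y} = {y | NoRuinBefore u (t - ζ) y} ∪
      ⋃ s ∈ Finset.Icc 1 (t - ζ - 1), ⋃ w ∈ Finset.Icc 1 ζ, ⋃ z ∈ Finset.range w,
        {y | ParisianPiece u ζ t s w z y} := by
  ext y
  simp only [Set.mem_union, Set.mem_iUnion, Set.mem_ofPred_eq, exists_prop]
  constructor
  · intro h
    by_cases hnr : NoRuinBefore u (t - ζ) y
    · exact Or.inl hnr
    · exact Or.inr (h.exists_parisianPiece hnr)
  · rintro (hnr | ⟨s, -, w, hw, z, -, h⟩)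
    · exact (parisianSurvives_of_noRuinBefore hu hnr).mono (by omega)
    · exact h.parisianSurvives hu (Finset.mem_Icc.1 hw).2

lemma ParisianPiece.disjoint {s' w' z' : ℕ} (hs : 1 ≤ s) (hs' : 1 ≤ s')
    (hne : ¬ (s = s' ∧ w = w' ∧ z = z')) :
    Disjoint {y | ParisianPiece u ζ t s w z y} {y | ParisianPiece u ζ t s' w' z' y} :=
  Set.disjoint_left.2 fun _ h h' => hne (h.unique hs hs' h')

lemma measure_parisianSurvives (ν : Measure (ℕ → ℕ)) (hu : 0 < u) :
    ν {y | ParisianSurvives u ζ t y} = ν {y | NoRuinBefore u (t - ζ) y} +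
      ∑ s ∈ Finset.Icc 1 (t - ζ - 1), ∑ w ∈ Finset.Icc 1 ζ, ∑ z ∈ Finset.range w,
        ν {y | ParisianPiece u ζ t s w z y} := by
  have hmeas (s w : ℕ) :
      MeasurableSet (⋃ z ∈ Finset.range w, {y | ParisianPiece u ζ t s w z y}) :=
    Finset.measurableSet_biUnion _ fun z _ => measurableSet_parisianPiece u ζ t s w z
  have hmeas' (s : ℕ) := Finset.measurableSet_biUnion (Finset.Icc 1 ζ) fun w _ => hmeas s w
  rw [setOf_parisianSurvives hu,
    measure_union ?_ (Finset.measurableSet_biUnion _ fun s _ => hmeas' s),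
    measure_biUnion_finset ?_ fun s _ => hmeas' s]
  · refine congrArg _ (Finset.sum_congr rfl fun s hs => ?_)
    have hs1 := (Finset.mem_Icc.1 hs).1
    rw [measure_biUnion_finset ?_ fun w _ => hmeas s w]
    · refine Finset.sum_congr rfl fun w _ => ?_
      rw [measure_biUnion_finset ?_ fun z _ => measurableSet_parisianPiece u ζ t s w z]
      exact fun z _ z' _ hzz' => ParisianPiece.disjoint hs1 hs1 (by tauto)
    · intro w _ w' _ hww'
      simp only [Set.disjoint_iUnion_left, Set.disjoint_iUnion_right]
      exact fun _ _ _ _ => ParisianPiece.disjoint hs1 hs1 (by tauto)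
  · intro s hs s' hs' hss'
    simp only [Set.disjoint_iUnion_left, Set.disjoint_iUnion_right]
    exact fun _ _ _ _ _ _ _ _ => ParisianPiece.disjoint (Finset.mem_Icc.1 hs).1
      (Finset.mem_Icc.1 hs').1 (by tauto)
  · simp only [Set.disjoint_iUnion_right]
    refine fun s hs w _ z _ => Set.disjoint_left.2 fun y hnr h => ?_
    exact h.not_noRuinBefore (Finset.mem_Icc.1 hs).1 (by have := Finset.mem_Icc.1 hs; omega) hnr

section CycleLemma

variable {x : ℕ → ℕ}

lemma sum_range_add_of_periodic (hx : ∀ n, x (n + w) = x n) (j : ℕ) :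
    ∑ i ∈ Finset.range w, x (j + i) = ∑ i ∈ Finset.range w, x i := by
  induction j with
  | zero => simp
  | succ j ih =>
    have h := Finset.sum_range_succ' (fun i => x (j + i)) w
    rw [Finset.sum_range_succ, hx, add_zero] at h
    simp only [show ∀ i, j + 1 + i = j + (i + 1) by omega]
    omega

lemma riskPath_shift_of_periodic (hx : ∀ n, x (n + w) = x n) (j : ℕ) :
    riskPath 0 (shift j x) w = riskPath 0 x w := by
  simp only [riskPath, shift, sum_range_add_of_periodic hx]

lemma riskPath_add_period (hx : ∀ n, x (n + w) = x n) (n : ℕ) :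
    riskPath 0 x (n + w) = riskPath 0 x n + riskPath 0 x w := by
  rw [riskPath_add, riskPath_eq_add_riskPath_zero, riskPath_shift_of_periodic hx]

lemma firstPassage_shift_iff_isRecord {k : ℕ} (hx : ∀ n, x (n + w) = x n)
    (hk : riskPath 0 x w = k) {j : ℕ} (hj : j < w) :
    FirstPassage k w (shift j x) ↔ ∀ i < j + w, riskPath 0 x i < riskPath 0 x (j + w) := by
  have hshift : ∀ n, riskPath 0 (shift j x) n = riskPath 0 x (j + n) - riskPath 0 x j := by
    intro n; rw [riskPath_add, riskPath_eq_add_riskPath_zero (riskPath 0 x j)]; ring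
  have hper := riskPath_add_period hx
  unfold FirstPassage
  simp only [hshift, hper j, hk, add_sub_cancel_left, true_and]
  constructor
  · intro h i hi
    rcases le_or_gt j i with hji | hij
    · have := h (i - j) (by omega)
      rw [Nat.add_sub_cancel' hji] at this
      omega
    · have := h (i + w - j) (by omega)
      rw [show j + (i + w - j) = i + w by omega, hper i, hk] at this
      omega
  · intro h n hn
    have := h (j + n) (by omega)
    omega

open Classical in
/-- The cycle lemma. -/
lemma card_filter_firstPassage_shift {k : ℕ} (hw : 0 < w) (hx : ∀ n, x (n + w) = x n)
    (hk : riskPath 0 x w = k) :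
    #{j ∈ Finset.range w | FirstPassage k w (shift j x)} = k := by
  rw [Finset.filter_congr fun j hj =>
    (firstPassage_shift_iff_isRecord hx hk (Finset.mem_range.1 hj)).trans (by rw [add_comm j w])]
  refine card_filter_isRecord hw (riskPath_succ_le 0 x) fun n => ?_
  rw [riskPath_add_period hx, hk]

end CycleLemma

lemma measurableSet_setOf_riskPath_eq (u : ℤ) (n : ℕ) (k : ℤ) :
    MeasurableSet {y : ℕ → ℕ | riskPath u y n = k} :=
  (by unfold riskPath; fun_prop : Measurable fun y : ℕ → ℕ => riskPath u y n)
    (measurableSet_singleton k)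

def rotate (w j : ℕ) (y : ℕ → ℕ) : ℕ → ℕ := fun i => y ((j + i) % w)

section Kendall

lemma sum_indicator_firstPassage_rotate (hw : 0 < w) (k : ℕ) (y : ℕ → ℕ) :
    ∑ j ∈ Finset.range w,
        {y | FirstPassage k w (rotate w j y)}.indicator (1 : (ℕ → ℕ) → ℝ≥0∞) y =
      k * {y | riskPath 0 y w = k}.indicator 1 y := by
  classical
  set x : ℕ → ℕ := fun i => y (i % w)
  have hx : ∀ n, x (n + w) = x n := fun n => by simp only [x, Nat.add_mod_right]
  have hxy : riskPath 0 x w = riskPath 0 y w :=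
    riskPath_congr (fun i hi => by simp only [x, Nat.mod_eq_of_lt hi]) le_rfl
  simp only [Set.indicator_apply, Set.mem_ofPred_eq, Pi.one_apply]
  by_cases hk : riskPath 0 y w = k
  · rw [if_pos hk, mul_one, Finset.sum_boole]
    exact_mod_cast card_filter_firstPassage_shift hw hx (hxy.trans hk)
  · rw [if_neg hk, mul_zero]
    refine Finset.sum_eq_zero fun j _ => if_neg fun h => hk ?_
    have := h.1
    rwa [← hxy, ← riskPath_shift_of_periodic hx j]

variable {μ : Measure ℕ} [IsProbabilityMeasure μ]

/-- Kendall's identity `P(τ_k = w) = (k / w) P(S_w = w - k)`, proved by averaging over the `w`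
cyclic rotations of the first `w` claims, which all have the same law. -/
lemma infinitePi_firstPassage (hw : 0 < w) (k : ℕ) :
    Measure.infinitePi (fun _ : ℕ => μ) {y | FirstPassage k w y} =
      k / w * Measure.infinitePi (fun _ : ℕ => μ) {y | riskPath 0 y w = k} := by
  set ν := Measure.infinitePi fun _ : ℕ => μ
  have hmeasR := measurableSet_setOf_riskPath_eq 0 w k
  have hmeasFP (j : ℕ) : MeasurableSet {y | FirstPassage k w (rotate w j y)} :=
    (dependsOn_firstPassage k w).measurableSet_setOf.preimage
      (measurable_pi_lambda _ fun _ => measurable_pi_apply _)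
  have hrot : ∀ j ∈ Finset.range w,
      ν {y | FirstPassage k w (rotate w j y)} = ν {y | FirstPassage k w y} := by
    refine fun j _ => infinitePi_setOf_comp_eq (dependsOn_firstPassage k w) fun a ha b hb h => ?_
    simp only [Finset.coe_range, Set.mem_Iio] at ha hb
    rw [← Nat.mod_eq_of_lt ha, ← Nat.mod_eq_of_lt hb]
    exact Nat.ModEq.add_left_cancel' j h
  have key : (w : ℝ≥0∞) * ν {y | FirstPassage k w y} = k * ν {y | riskPath 0 y w = k} := by
    calc (w : ℝ≥0∞) * ν {y | FirstPassage k w y}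
        = ∑ j ∈ Finset.range w, ν {y | FirstPassage k w (rotate w j y)} := by
          rw [Finset.sum_congr rfl hrot, Finset.sum_const, Finset.card_range, nsmul_eq_mul]
      _ = ∫⁻ y, ∑ j ∈ Finset.range w,
            {y | FirstPassage k w (rotate w j y)}.indicator 1 y ∂ν := by
          rw [lintegral_finsetSum _ fun j _ => measurable_one.indicator (hmeasFP j)]
          simp only [lintegral_indicator_one (hmeasFP _)]
      _ = k * ν {y | riskPath 0 y w = k} := by
          simp only [sum_indicator_firstPassage_rotate hw]
          rw [lintegral_const_mul _ (measurable_one.indicator hmeasR),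
            lintegral_indicator_one hmeasR]
  have hw0 : (w : ℝ≥0∞) ≠ 0 := by exact_mod_cast hw.ne'
  rw [← ENNReal.mul_div_right_comm, ENNReal.eq_div_iff hw0 (ENNReal.natCast_ne_top w), key]

end Kendall

lemma infinitePi_parisianPiece {μ : Measure ℕ} [IsProbabilityMeasure μ]
    (u : ℤ) (ζ t s w z : ℕ) :
    Measure.infinitePi (fun _ : ℕ => μ) {y | ParisianPiece u ζ t s w z y} =
      Measure.infinitePi (fun _ : ℕ => μ) {y | RuinWithDeficit u s z y} *
        (Measure.infinitePi (fun _ : ℕ => μ) {y | FirstPassage (z + 1) w y} *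
          Measure.infinitePi (fun _ : ℕ => μ) {y | ParisianSurvives 1 ζ (t - w - s) y}) := by
  have hpass := dependsOn_firstPassage (z + 1) w
  have hsurv := dependsOn_parisianSurvives 1 ζ (t - w - s)
  rw [← infinitePi_setOf_and_shift hpass hsurv,
    ← infinitePi_setOf_and_shift (dependsOn_ruinWithDeficit u s z)
      (hpass.and (hsurv.comp_left _))]
  rfl

end ClaimPath

open ClaimPath

section ClaimProcess

lemma natCast_le_sInf_image_iff {P : ℕ → Prop} {m : ℕ} :
    (m : ℕ∞) ≤ sInf ((fun n : ℕ => (n : ℕ∞)) '' {n | P n}) ↔ ∀ n < m, ¬ P n := by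
  simp only [le_sInf_iff, Set.mem_image, Set.mem_ofPred_eq, forall_exists_index, and_imp,
    forall_apply_eq_imp_iff₂, Nat.cast_le]
  exact ⟨fun h n hn hP => absurd (h n hP) (by omega),
    fun h n hP => not_lt.1 fun hn => h n hn hP⟩

lemma sInf_image_eq_natCast_iff {P : ℕ → Prop} {s : ℕ} :
    sInf ((fun n : ℕ => (n : ℕ∞)) '' {n | P n}) = s ↔ P s ∧ ∀ n < s, ¬ P n := by
  constructor
  · intro h
    have hmin := natCast_le_sInf_image_iff.1 h.ge
    refine ⟨by_contra fun hs => ?_, hmin⟩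
    have := (natCast_le_sInf_image_iff (m := s + 1)).2 fun n hn => by
      rcases Nat.lt_succ_iff_lt_or_eq.1 hn with hn | rfl
      exacts [hmin n hn, hs]
    rw [h] at this
    exact absurd (Nat.cast_le.1 this) (by omega)
  · rintro ⟨hs, hmin⟩
    exact le_antisymm (sInf_le ⟨s, hs, rfl⟩) (natCast_le_sInf_image_iff.2 hmin)

variable {E : Type*} (Y : ℕ → E → ℕ) {u : ℤ} (ω : E)

lemma riskProc_eq_riskPath (n : ℕ) : riskProc Y u n ω = riskPath u (fun i => Y i ω) n := rfl

lemma le_ruinTime_iff_s6 (m : ℕ) :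
    (m : ℕ∞) ≤ ruinTime Y u ω ↔ NoRuinBefore u m (fun i => Y i ω) := by
  rw [ruinTime, natCast_le_sInf_image_iff, NoRuinBefore]
  simp only [riskProc_eq_riskPath, not_and, not_le]
  exact ⟨fun h n h1 hn => h n hn h1, fun h n hn h1 => h n h1 hn⟩

lemma ruinTime_eq_and_iff {s z : ℕ} (hs : 1 ≤ s) :
    ruinTime Y u ω = s ∧ riskProc Y u s ω = -z ↔ RuinWithDeficit u s z (fun i => Y i ω) := by
  rw [ruinTime, sInf_image_eq_natCast_iff, RuinWithDeficit, NoRuinBefore, riskProc_eq_riskPath]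
  simp only [riskProc_eq_riskPath, not_and, not_le]
  constructor
  · rintro ⟨⟨⟨-, -⟩, hmin⟩, hz⟩
    exact ⟨fun n hn1 hn => hmin n hn hn1, hz⟩
  · rintro ⟨hmin, hz⟩
    exact ⟨⟨⟨hs, by omega⟩, fun n hn hn1 => hmin n hn1 hn⟩, hz⟩

lemma aggClaims_eq_sub_iff {k w : ℕ} (hkw : k ≤ w) :
    aggClaims Y w ω = w - k ↔ riskPath 0 (fun i => Y i ω) w = k := by
  simp only [aggClaims, riskPath]
  omega

lemma le_lastUp_add_iff (hu : 0 < u) {n : ℕ} (hn : 0 < n) (ζ : ℕ) :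
    n ≤ lastUp Y u n ω + ζ ↔
      ∃ s < n, 0 < riskPath u (fun i => Y i ω) s ∧ n ≤ s + ζ := by
  set L := {s : ℕ | s < n ∧ 0 < riskProc Y u s ω}
  have hL : lastUp Y u n ω = sSup L := rfl
  have hbdd : BddAbove L := ⟨n, fun s hs => hs.1.le⟩
  have hmem : sSup L ∈ L :=
    Nat.sSup_mem ⟨0, hn, by rwa [riskProc_eq_riskPath, riskPath_zero]⟩ hbdd
  rw [hL]
  refine ⟨fun h => ⟨sSup L, hmem.1, hmem.2, h⟩, ?_⟩
  rintro ⟨s, hsn, hs, hsζ⟩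
  have : s ≤ sSup L := le_csSup hbdd ⟨hsn, hs⟩
  omega

lemma le_parisian_iff (hu : 0 < u) (ζ t : ℕ) :
    (t : ℕ∞) ≤ parisian Y u ζ ω ↔ ParisianSurvives u ζ t (fun i => Y i ω) := by
  rw [parisian, natCast_le_sInf_image_iff]
  refine forall_congr' fun n => imp_congr_right fun _ => ?_
  rw [riskProc_eq_riskPath, not_and', not_lt]
  refine imp_congr_right fun hR => ?_
  have hn : 0 < n := Nat.pos_of_ne_zero fun h => by
    rw [h, riskPath_zero] at hR; omega
  rw [← le_lastUp_add_iff Y ω hu hn]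
  omega

end ClaimProcess

lemma measure_setOf_claims_eq_infinitePi [IsProbabilityMeasure (ℙ : Measure Ω)]
    {Y : ℕ → Ω → ℕ} (hY : ∀ i, Measurable (Y i)) (hindep : iIndepFun Y ℙ)
    (hid : ∀ i, IdentDistrib (Y i) (Y 0) ℙ ℙ) {P : (ℕ → ℕ) → Prop}
    (hP : MeasurableSet {y | P y}) :
    ℙ {ω | P (fun i => Y i ω)} =
      Measure.infinitePi (fun _ : ℕ => Measure.map (Y 0) ℙ) {y | P y} := by
  have hlaw : Measure.map (fun ω i => Y i ω) ℙ =
      Measure.infinitePi (fun _ : ℕ => Measure.map (Y 0) ℙ) := by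
    rw [hindep.map_fun_eq_infinitePi_map hY]
    exact congrArg _ (funext fun i => (hid i).map_eq)
  rw [← hlaw, Measure.map_apply (measurable_pi_lambda _ hY) hP]
  rfl

theorem parisian_finite_time_recursion_general
    [IsProbabilityMeasure (ℙ : Measure Ω)]
    (Y : ℕ → Ω → ℕ) (hY : ∀ i, Measurable (Y i))
    (hindep : iIndepFun Y ℙ)
    (hid : ∀ i, IdentDistrib (Y i) (Y 0) ℙ ℙ)
    (u : ℕ) (hu : 1 ≤ u) (ζ : ℕ) (t : ℕ) :
    ℙ {ω | (t : ℕ∞) ≤ parisian Y (u : ℤ) ζ ω} =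
      ℙ {ω | ((t - ζ : ℕ) : ℕ∞) ≤ ruinTime Y (u : ℤ) ω} +
      ∑ s ∈ Finset.Icc 1 (t - ζ - 1), ∑ w ∈ Finset.Icc 1 ζ, ∑ z ∈ Finset.range w,
        ℙ {ω | ruinTime Y (u : ℤ) ω = (s : ℕ∞) ∧ riskProc Y (u : ℤ) s ω = -(z : ℤ)} *
        ((((z + 1 : ℕ)) : ℝ≥0∞) / (w : ℝ≥0∞) * ℙ {ω | aggClaims Y w ω = w - (z + 1)}) *
        ℙ {ω | ((t - w - s : ℕ) : ℕ∞) ≤ parisian Y (1 : ℤ) ζ ω} := by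
  have := Measure.isProbabilityMeasure_map (μ := ℙ) (hY 0).aemeasurable
  have hu' : (0 : ℤ) < u := by omega
  have law {P : (ℕ → ℕ) → Prop} (hP : MeasurableSet {y | P y}) :=
    measure_setOf_claims_eq_infinitePi hY hindep hid hP
  simp only [le_parisian_iff Y _ hu', le_parisian_iff Y _ zero_lt_one, le_ruinTime_iff_s6]
  rw [law (dependsOn_parisianSurvives _ ζ t).measurableSet_setOf, measure_parisianSurvives _ hu',
    law (dependsOn_noRuinBefore _ _).measurableSet_setOf]
  refine congrArg _ <| sum_congr rfl fun s hs => sum_congr rfl fun w hw =>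
    sum_congr rfl fun z hz => ?_
  simp only [ruinTime_eq_and_iff Y _ (mem_Icc.1 hs).1, aggClaims_eq_sub_iff Y _ (mem_range.1 hz)]
  rw [infinitePi_parisianPiece, infinitePi_firstPassage (mem_Icc.1 hw).1,
    law (dependsOn_ruinWithDeficit _ s z).measurableSet_setOf,
    law (measurableSet_setOf_riskPath_eq 0 w _),
    law (dependsOn_parisianSurvives 1 ζ _).measurableSet_setOf]
  simp only [mul_assoc]

/-- Recursive representation of the finite-time Parisian ruin probability, where the
first passage probability `P(τ_{z+1} = ω)` is given by Kendall's identity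
`((z+1)/ω) p^{*ω}_{ω-z-1}`. -/
theorem parisian_finite_time_recursion
    [IsProbabilityMeasure (ℙ : Measure Ω)]
    (Y : ℕ → Ω → ℕ) (hY : ∀ i, Measurable (Y i))
    (hindep : iIndepFun Y ℙ)
    (hid : ∀ i, IdentDistrib (Y i) (Y 0) ℙ ℙ)
    (u : ℕ) (hu : 1 ≤ u) (ζ : ℕ) (hζ : 1 ≤ ζ) (t : ℕ) (ht : ζ + 2 ≤ t) :
    ℙ {ω | (t : ℕ∞) ≤ parisian Y (u : ℤ) ζ ω} =
      ℙ {ω | ((t - ζ : ℕ) : ℕ∞) ≤ ruinTime Y (u : ℤ) ω} +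
      ∑ s ∈ Finset.Icc 1 (t - ζ - 1), ∑ w ∈ Finset.Icc 1 ζ, ∑ z ∈ Finset.range w,
        ℙ {ω | ruinTime Y (u : ℤ) ω = (s : ℕ∞) ∧ riskProc Y (u : ℤ) s ω = -(z : ℤ)} *
        ((((z + 1 : ℕ)) : ℝ≥0∞) / (w : ℝ≥0∞) * ℙ {ω | aggClaims Y w ω = w - (z + 1)}) *
        ℙ {ω | ((t - w - s : ℕ) : ℕ∞) ≤ parisian Y (1 : ℤ) ζ ω} :=
  parisian_finite_time_recursion_general Y hY hindep hid u hu ζ t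

end
end

section
/- For the discrete-time risk process with i.i.d. ℕ-valued claims having mean μ = E(Y_1) < 1, the infinite-horizon ruin probability equals P_u(T_0 < ∞) = (1 − μ) Σ_{j=u+1}^{∞} p^{*(j−u)}_j for every integer u ≥ 0. -/
open MeasureTheory ProbabilityTheory Filter
open scoped ENNReal

noncomputable section

variable {Ω : Type*} [MeasureSpace Ω]

/-!
Write `S_t` for the aggregate claims and `ψ(u)` for the ruin probability. The claim surplus
`S_t - t` moves down by at most one per step and, by the strong law and `μ < 1`, drifts to `-∞`;
hence, up to a null set, ruin from `u` happens exactly when `S_t = u + t` for some `t ≥ 1`.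
Splitting at the first such time (strong Markov property) gives the renewal identity
`P(S_{k+1} = u + k + 1) = ∑_{i + j = k} f_u(i) g(j)`, where `g(j) = P(S_j = j)` and `f_u` is the
law of the first hitting time, of total mass `ψ(u)`. Summing over `k` gives
`∑_k P(S_{k+1} = u + k + 1) = ψ(u) ∑_j g(j)`, and the case `u = 0` gives
`∑_j g(j) = (1 - ψ(0))⁻¹`. Finally `1 - ψ(0) = P(S_t < t for all t ≥ 1) = 1 - μ`: by
exchangeability and Takács' cycle lemma, `n P(S_t < t for t ≤ n) = E (n - S_n)⁺`, and
`(1 - S_n / n)⁺ → 1 - μ` almost surely.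
-/

open scoped Topology
open Finset

theorem exists_ge_eq_of_le_of_eventually_lt {f : ℕ → ℤ} (hstep : ∀ t, f t - 1 ≤ f (t + 1))
    {u : ℤ} {m : ℕ} (hm : u ≤ f m) (hlim : ∀ᶠ t in atTop, f t < u) : ∃ m' ≥ m, f m' = u := by
  classical
  have hex : ∃ k, f (m + k + 1) < u := by
    obtain ⟨M, hM⟩ := eventually_atTop.1 hlim
    exact ⟨M, hM _ (by omega)⟩
  refine ⟨m + Nat.find hex, by omega, le_antisymm ?_ ?_⟩
  · linarith [hstep (m + Nat.find hex), Nat.find_spec hex]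
  · rcases Nat.eq_zero_or_eq_succ_pred (Nat.find hex) with h | h
    · simpa [h] using hm
    · have := not_lt.1 (Nat.find_min hex (Nat.pred_lt_self (Nat.pos_of_ne_zero (by omega))))
      rwa [show m + (Nat.find hex).pred + 1 = m + Nat.find hex by omega] at this

def IsStrictFutureMin (f : ℕ → ℤ) (r : ℕ) : Prop := ∀ t, 0 < t → f r < f (r + t)

section SkipFreeWalk

variable {f : ℕ → ℤ} {n : ℕ} {s : ℤ}

theorem IsStrictFutureMin.lt_of_lt {r r' : ℕ} (hr : IsStrictFutureMin f r) (h : r < r') :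
    f r < f r' := by
  simpa [Nat.add_sub_cancel' h.le] using hr (r' - r) (by omega)

theorem map_add_mul_of_map_add (hper : ∀ t, f (t + n) = f t + s) (t q : ℕ) :
    f (t + n * q) = f t + q * s := by
  induction q with
  | zero => simp
  | succ q ih => rw [Nat.mul_succ, ← add_assoc, hper, ih]; push_cast; ring

theorem isStrictFutureMin_add_iff (hper : ∀ t, f (t + n) = f t + s) (r : ℕ) :
    IsStrictFutureMin f (r + n) ↔ IsStrictFutureMin f r := by
  refine forall₂_congr fun t _ => ?_
  rw [show r + n + t = r + t + n by omega, hper, hper]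
  exact add_lt_add_iff_right s

theorem exists_forall_le_of_map_add (hn : 0 < n) (hs : 0 ≤ s)
    (hper : ∀ t, f (t + n) = f t + s) : ∃ j, ∀ t, f j ≤ f t := by
  obtain ⟨j, -, hj⟩ := (range n).exists_min_image f ⟨0, mem_range.2 hn⟩
  refine ⟨j, fun t => ?_⟩
  rw [← Nat.mod_add_div t n, map_add_mul_of_map_add hper]
  have := hj (t % n) (mem_range.2 (Nat.mod_lt t hn))
  nlinarith [(t / n : ℕ).cast_nonneg (α := ℤ)]

theorem tendsto_atTop_of_map_add (hn : 0 < n) (hs : 0 < s)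
    (hper : ∀ t, f (t + n) = f t + s) : Tendsto f atTop atTop := by
  obtain ⟨j, hj⟩ := exists_forall_le_of_map_add hn hs.le hper
  refine tendsto_atTop.2 fun v => eventually_atTop.2 ⟨n * (v - f j).toNat + n, fun t ht => ?_⟩
  have hq : (v - f j).toNat + 1 ≤ t / n := by
    rw [Nat.le_div_iff_mul_le hn]; nlinarith
  rw [← Nat.mod_add_div t n, map_add_mul_of_map_add hper]
  have := hj (t % n)
  have : v - f j < (t / n : ℕ) := by omega
  nlinarith

theorem isStrictFutureMin_iff_forall_mem_Icc (hn : 0 < n) (hs : 0 ≤ s)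
    (hper : ∀ t, f (t + n) = f t + s) (r : ℕ) :
    IsStrictFutureMin f r ↔ ∀ t ∈ Icc 1 n, f r < f (r + t) := by
  refine ⟨fun h t ht => h t (mem_Icc.1 ht).1, fun h t ht => ?_⟩
  induction t using Nat.strong_induction_on with
  | _ t ih =>
    by_cases htn : t ≤ n
    · exact h t (mem_Icc.2 ⟨ht, htn⟩)
    · have := ih (t - n) (by omega) (by omega)
      rw [show r + t = r + (t - n) + n by omega, hper]
      linarith

/-- The last time the walk is `≤ v` is a strict future minimum; skip-freeness makes its value
exactly `v`. -/
theorem exists_isStrictFutureMin_eq (hstep : ∀ t, f (t + 1) ≤ f t + 1) (hn : 0 < n)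
    (hs : 0 < s) (hper : ∀ t, f (t + n) = f t + s) {j : ℕ} {v : ℤ} (hv : f j ≤ v) :
    ∃ r, IsStrictFutureMin f r ∧ f r = v := by
  classical
  obtain ⟨B, hB⟩ := eventually_atTop.1 <|
    (tendsto_atTop_of_map_add hn hs hper).eventually_gt_atTop v
  have hjB : j ≤ B := by by_contra h; exact absurd (hB j (by omega)) (not_lt.2 hv)
  set r := Nat.findGreatest (fun t => f t ≤ v) B
  have hr : f r ≤ v := Nat.findGreatest_spec (P := fun t => f t ≤ v) hjB hv
  have hafter (t : ℕ) (ht : 0 < t) : v < f (r + t) := by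
    by_contra h
    by_cases hle : r + t ≤ B
    · exact Nat.findGreatest_is_greatest (P := fun t => f t ≤ v) (by omega) hle (not_lt.1 h)
    · exact h (hB _ (by omega))
  have := hafter 1 one_pos
  have := hstep r
  exact ⟨r, fun t ht => by have := hafter t ht; omega, by omega⟩

theorem count_isStrictFutureMin (hstep : ∀ t, f (t + 1) ≤ f t + 1) (hn : 0 < n) (hs : 0 < s)
    (hper : ∀ t, f (t + n) = f t + s) [DecidablePred (IsStrictFutureMin f)] :
    Nat.count (IsStrictFutureMin f) n = s.toNat := by
  obtain ⟨j, hj⟩ := exists_forall_le_of_map_add hn hs.le hper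
  obtain ⟨r₀, hr₀, -⟩ := exists_isStrictFutureMin_eq hstep hn hs hper (le_refl (f j))
  have hr₀n : IsStrictFutureMin f (r₀ + n) := (isStrictFutureMin_add_iff hper r₀).2 hr₀
  rw [← Nat.filter_Ico_card_eq_of_periodic r₀ n _
    fun r => propext (isStrictFutureMin_add_iff hper r),
    show s.toNat = #(Ico (f r₀) (f r₀ + s)) by simp]
  have hle {r r'} (hr : IsStrictFutureMin f r) (h : r ≤ r') : f r ≤ f r' :=
    h.eq_or_lt.elim (fun h => h ▸ le_rfl) fun h => (hr.lt_of_lt h).le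
  -- The strict future minima in a period window are in bijection, via `f`, with a period of levels.
  refine card_bij (fun r _ => f r) (fun r hr => ?_) (fun r hr r' hr' heq => ?_) fun v hv => ?_
  · simp only [mem_filter, mem_Ico] at hr ⊢
    exact ⟨hle hr₀ hr.1.1, hper r₀ ▸ hr.2.lt_of_lt hr.1.2⟩
  · simp only [mem_filter] at hr hr'
    by_contra hne
    rcases Nat.lt_or_gt_of_ne hne with h | h
    · exact (hr.2.lt_of_lt h).ne heq
    · exact (hr'.2.lt_of_lt h).ne heq.symm
  · simp only [mem_Ico] at hv
    obtain ⟨r, hr, rfl⟩ := exists_isStrictFutureMin_eq hstep hn hs hper ((hj r₀).trans hv.1)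
    refine ⟨r, mem_filter.2 ⟨mem_Ico.2 ⟨?_, ?_⟩, hr⟩, rfl⟩
    · by_contra h; exact (hr.lt_of_lt (not_le.1 h)).not_ge hv.1
    · by_contra h; exact (hle hr₀n (not_lt.1 h)).not_gt (hper r₀ ▸ hv.2)

end SkipFreeWalk

/-- Takács' cycle lemma. -/
theorem count_rotations_sum_range_lt (y : ℕ → ℕ) {n : ℕ} (hn : 0 < n) :
    Nat.count (fun r => ∀ t ∈ Icc (1 : ℕ) n, ∑ i ∈ range t, y ((r + i) % n) < t) n =
      n - ∑ i ∈ range n, y i := by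
  classical
  -- Rotation `r` is counted iff the walk `f` of the periodic extension stays above `f r` on
  -- `(r, r + n]`; `f` is skip-free upwards with drift `s` per period.
  set f : ℕ → ℤ := fun t => t - ∑ i ∈ range t, (y (i % n) : ℤ) with hf
  set s : ℤ := n - ∑ i ∈ range n, (y i : ℤ) with hs_def
  rw [← Nat.cast_sum] at hs_def
  have hincr (r t : ℕ) : (∑ i ∈ range t, y ((r + i) % n) : ℕ) = t - (f (r + t) - f r) := by
    simp only [hf, sum_range_add]; push_cast; ring
  have hper (t : ℕ) : f (t + n) = f t + s := by
    induction t with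
    | zero =>
      have : ∑ i ∈ range n, (y (i % n) : ℤ) = ∑ i ∈ range n, (y i : ℤ) :=
        sum_congr rfl fun i hi => by rw [Nat.mod_eq_of_lt (mem_range.1 hi)]
      simp [hf, s, this]
    | succ t ih =>
      simp only [hf, show t + 1 + n = t + n + 1 by omega, sum_range_succ,
        Nat.add_mod_right] at ih ⊢
      push_cast at ih ⊢; linarith
  have hgood (r : ℕ) : (∀ t ∈ Icc (1 : ℕ) n, ∑ i ∈ range t, y ((r + i) % n) < t) ↔
      ∀ t ∈ Icc 1 n, f r < f (r + t) :=
    forall₂_congr fun t _ => by rw [← Nat.cast_lt (α := ℤ), hincr]; omega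
  simp_rw [hgood]
  rcases le_or_gt s 0 with hs | hs
  · rw [Nat.count_iff_forall_not.2 fun r _ h => ?_]
    · omega
    · have := h n (mem_Icc.2 ⟨hn, le_rfl⟩)
      rw [hper] at this; omega
  · have hstep (t : ℕ) : f (t + 1) ≤ f t + 1 := by
      simp only [hf, sum_range_succ]; push_cast; linarith [(y (t % n)).cast_nonneg (α := ℤ)]
    simp only [← isStrictFutureMin_iff_forall_mem_Icc hn hs.le hper]
    rw [count_isStrictFutureMin hstep hn hs hper]
    omega

theorem ENNReal.tsum_mul_tsum_eq_tsum_sum_antidiagonal (f g : ℕ → ℝ≥0∞) :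
    (∑' i, f i) * ∑' j, g j = ∑' k, ∑ p ∈ antidiagonal k, f p.1 * g p.2 := by
  calc (∑' i, f i) * ∑' j, g j = ∑' p : ℕ × ℕ, f p.1 * g p.2 := by
        rw [ENNReal.tsum_prod (f := fun i j => f i * g j), ← ENNReal.tsum_mul_right]
        exact tsum_congr fun i => ENNReal.tsum_mul_left.symm
    _ = ∑' x : Σ k, antidiagonal k, f x.2.1.1 * g x.2.1.2 :=
        (HasAntidiagonal.sigmaAntidiagonalEquivProd.tsum_eq fun p : ℕ × ℕ => f p.1 * g p.2).symm
    _ = _ := by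
        rw [ENNReal.tsum_sigma']
        exact tsum_congr fun k => Finset.tsum_subtype _ fun p : ℕ × ℕ => f p.1 * g p.2

theorem ENNReal.tsum_eq_inv_one_sub_of_renewal {a f : ℕ → ℝ≥0∞} (h₀ : a 0 = 1)
    (hrec : ∀ k, a (k + 1) = ∑ p ∈ antidiagonal k, f p.1 * a p.2) (hf : ∑' i, f i < 1) :
    ∑' k, a k = (1 - ∑' i, f i)⁻¹ := by
  set c := ∑' i, f i with hc
  have hc₀ : 1 - c ≠ 0 := (tsub_pos_of_lt hf).ne'
  have hfix : ∑' k, a k = 1 + c * ∑' k, a k := by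
    conv_lhs => rw [tsum_eq_zero_add' ENNReal.summable, h₀]
    simp_rw [hc, ENNReal.tsum_mul_tsum_eq_tsum_sum_antidiagonal, hrec]
  -- Finiteness of `∑ a` comes from the truncated renewal inequality `A_{N+1} ≤ 1 + c A_N`.
  have hconv (N : ℕ) : ∑ k ∈ range N, a (k + 1) ≤ c * ∑ j ∈ range N, a j := by
    set a' : ℕ → ℝ≥0∞ := fun j => if j < N then a j else 0
    calc ∑ k ∈ range N, a (k + 1) = ∑ k ∈ range N, ∑ p ∈ antidiagonal k, f p.1 * a' p.2 := by
          refine sum_congr rfl fun k hk => (hrec k).trans (sum_congr rfl fun p hp => ?_)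
          rw [HasAntidiagonal.mem_antidiagonal] at hp
          simp only [a', if_pos (show p.2 < N by simp at hk; omega)]
      _ ≤ ∑' k, ∑ p ∈ antidiagonal k, f p.1 * a' p.2 := ENNReal.sum_le_tsum _
      _ = c * ∑ j ∈ range N, a j := by
          rw [← ENNReal.tsum_mul_tsum_eq_tsum_sum_antidiagonal,
            tsum_eq_sum (s := range N) fun j hj => if_neg (by simpa using hj)]
          exact congrArg _ (sum_congr rfl fun j hj => if_pos (mem_range.1 hj))
  have hbound (N : ℕ) : ∑ k ∈ range N, a k ≤ (1 - c)⁻¹ := by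
    induction N with
    | zero => simp
    | succ N ih =>
      calc ∑ k ∈ range (N + 1), a k ≤ c * (1 - c)⁻¹ + 1 := by
            rw [sum_range_succ', h₀]; gcongr; exact (hconv N).trans (by gcongr)
        _ = (c + (1 - c)) * (1 - c)⁻¹ := by
            rw [add_mul, ENNReal.mul_inv_cancel hc₀ (ENNReal.sub_ne_top ENNReal.one_ne_top)]
        _ = (1 - c)⁻¹ := by rw [add_tsub_cancel_of_le hf.le, one_mul]
  have hfin : ∑' k, a k ≠ ⊤ :=
    ne_top_of_le_ne_top (ENNReal.inv_ne_top.2 hc₀)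
      (ENNReal.tsum_eq_iSup_nat.trans_le (iSup_le hbound))
  refine ENNReal.eq_inv_of_mul_eq_one_left ?_
  rw [ENNReal.mul_sub fun _ _ => hfin, mul_one, mul_comm]
  nth_rw 1 [hfix]
  exact ENNReal.add_sub_cancel_right (ENNReal.mul_ne_top (hf.trans ENNReal.one_lt_top).ne hfin)

namespace ProbabilityTheory

variable {Ω β : Type*} {mΩ : MeasurableSpace Ω} [MeasurableSpace β] {μ : Measure Ω}
  {X : ℕ → Ω → β}

theorem iIndepFun.map_reindex_eq (hX : ∀ i, Measurable (X i)) (hindep : iIndepFun X μ)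
    (hid : ∀ i, IdentDistrib (X i) (X 0) μ μ) {e : ℕ → ℕ} (he : Function.Injective e) :
    μ.map (fun ω i => X (e i) ω) = μ.map (fun ω i => X i ω) := by
  rw [(hindep.precomp he).map_fun_eq_infinitePi_map fun i => hX (e i),
    hindep.map_fun_eq_infinitePi_map hX]
  simp only [(hid _).map_eq]

theorem iIndepFun.measure_preimage_reindex (hX : ∀ i, Measurable (X i)) (hindep : iIndepFun X μ)
    (hid : ∀ i, IdentDistrib (X i) (X 0) μ μ) {e : ℕ → ℕ} (he : Function.Injective e)
    {E : Set (ℕ → β)} (hE : MeasurableSet E) :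
    μ ((fun ω i => X (e i) ω) ⁻¹' E) = μ ((fun ω i => X i ω) ⁻¹' E) := by
  rw [← Measure.map_apply (measurable_pi_lambda _ fun i => hX (e i)) hE,
    hindep.map_reindex_eq hX hid he, Measure.map_apply (measurable_pi_lambda _ hX) hE]

end ProbabilityTheory

theorem injective_rotate_of_lt {n : ℕ} (hn : 0 < n) (r : ℕ) :
    Function.Injective fun i => if i < n then (r + i) % n else i := by
  intro i j hij
  have := Nat.mod_lt (r + i) hn
  have := Nat.mod_lt (r + j) hn
  by_cases hi : i < n <;> by_cases hj : j < n <;> simp only [hi, hj, if_true, if_false] at hij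
  · rw [← Nat.mod_eq_of_lt hi, ← Nat.mod_eq_of_lt hj]; exact Nat.ModEq.add_left_cancel' r hij
  all_goals omega

section Paths

variable {Ω : Type*} {Y : ℕ → Ω → ℕ}

theorem aggClaims_succ (Y : ℕ → Ω → ℕ) (t : ℕ) (ω : Ω) :
    aggClaims Y (t + 1) ω = aggClaims Y t ω + Y t ω :=
  sum_range_succ _ t

theorem aggClaims_add (Y : ℕ → Ω → ℕ) (a j : ℕ) (ω : Ω) :
    aggClaims Y (a + j) ω = aggClaims Y a ω + ∑ l ∈ range j, Y (a + l) ω :=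
  sum_range_add _ a j

theorem ruinTime_ne_top_iff {u : ℤ} {ω : Ω} :
    ruinTime Y u ω ≠ ⊤ ↔ ∃ t, 1 ≤ t ∧ riskProc Y u t ω ≤ 0 := by
  simp [ruinTime, sInf_eq_top]

def hitSet (Y : ℕ → Ω → ℕ) (u t : ℕ) : Set Ω := {ω | aggClaims Y t ω = u + t}

/-- `firstHitSet Y u k`: the first `t ≥ 1` with `S_t = u + t` is `t = k + 1`. -/
def firstHitSet (Y : ℕ → Ω → ℕ) (u : ℕ) : ℕ → Set Ω := disjointed fun k => hitSet Y u (k + 1)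

def survivalSet (Y : ℕ → Ω → ℕ) (n : ℕ) : Set Ω :=
  {ω | ∀ t ∈ Icc (1 : ℕ) n, aggClaims Y t ω < t}

abbrev claimsSigma (Y : ℕ → Ω → ℕ) (S : Set ℕ) : MeasurableSpace Ω :=
  ⨆ i ∈ S, MeasurableSpace.comap (Y i) inferInstance

theorem measurable_sum_claimsSigma {S : Set ℕ} {s : Finset ℕ} {g : ℕ → ℕ}
    (h : ∀ l ∈ s, g l ∈ S) : Measurable[claimsSigma Y S] fun ω => ∑ l ∈ s, Y (g l) ω :=
  Finset.measurable_sum s fun l hl => (comap_measurable (Y (g l))).mono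
    (le_iSup₂ (f := fun i _ => MeasurableSpace.comap (Y i) _) (g l) (h l hl)) le_rfl

theorem measurableSet_hitSet_claimsSigma {u t t' : ℕ} (h : t ≤ t') :
    MeasurableSet[claimsSigma Y (Set.Iio t')] (hitSet Y u t) :=
  measurable_sum_claimsSigma (g := id) (fun l hl => by simp at hl ⊢; omega)
    (measurableSet_singleton _)

theorem measurableSet_firstHitSet_claimsSigma (u k : ℕ) :
    MeasurableSet[claimsSigma Y (Set.Iio (k + 1))] (firstHitSet Y u k) := by
  rw [firstHitSet, disjointed_eq_inter_compl]
  exact (measurableSet_hitSet_claimsSigma le_rfl).inter <| .iInter fun j => .iInter fun hj =>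
    (measurableSet_hitSet_claimsSigma (by omega)).compl

theorem firstHitSet_subset {u k : ℕ} : firstHitSet Y u k ⊆ hitSet Y u (k + 1) :=
  disjointed_subset _ k

theorem hitSet_succ_eq_biUnion (u k : ℕ) :
    hitSet Y u (k + 1) = ⋃ p ∈ antidiagonal k,
      firstHitSet Y u p.1 ∩ {ω | ∑ l ∈ range p.2, Y (p.1 + 1 + l) ω = p.2} := by
  ext ω
  simp only [Set.mem_iUnion, HasAntidiagonal.mem_antidiagonal, exists_prop, Set.mem_inter_iff,
    Set.mem_ofPred_eq]
  constructor
  · intro h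
    have : ω ∈ ⋃ i ∈ Iic k, firstHitSet Y u i := by
      rw [firstHitSet, biUnion_Iic_disjointed]
      exact le_partialSups (fun k => hitSet Y u (k + 1)) k h
    obtain ⟨i, hi, hω⟩ := Set.mem_iUnion₂.1 this
    have hhit : ω ∈ hitSet Y u (i + 1) := firstHitSet_subset hω
    have hsplit := aggClaims_add Y (i + 1) (k - i) ω
    rw [mem_Iic] at hi
    rw [show i + 1 + (k - i) = k + 1 by omega] at hsplit
    simp only [hitSet, Set.mem_ofPred_eq] at h hhit
    refine ⟨(i, k - i), by dsimp only; omega, hω, ?_⟩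
    dsimp only; omega
  · rintro ⟨⟨i, j⟩, hij, hω, hblock⟩
    have hhit : ω ∈ hitSet Y u (i + 1) := firstHitSet_subset hω
    simp only [hitSet, Set.mem_ofPred_eq] at hhit hblock ⊢
    rw [← hij, show i + j + 1 = i + 1 + j by ring, aggClaims_add]
    omega

/-- `S_t - t` moves down by at most one per step, so it cannot jump over the level `u`. -/
theorem exists_mem_hitSet_of_le {ω : Ω} {u t : ℕ} (hlim : ∀ᶠ s in atTop, aggClaims Y s ω < s)
    (ht : u + t ≤ aggClaims Y t ω) : ∃ m ≥ t, ω ∈ hitSet Y u m := by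
  have hstep (s : ℕ) :
      ((aggClaims Y s ω : ℤ) - s) - 1 ≤ (aggClaims Y (s + 1) ω : ℤ) - (s + 1 : ℕ) := by
    rw [aggClaims_succ]; push_cast; linarith [(Y s ω).cast_nonneg (α := ℤ)]
  obtain ⟨m, hm, heq⟩ := exists_ge_eq_of_le_of_eventually_lt
    (f := fun s => (aggClaims Y s ω : ℤ) - s) hstep (u := u) (m := t) (by omega)
    (hlim.mono fun s hs => show (aggClaims Y s ω : ℤ) - s < u by omega)
  exact ⟨m, hm, show aggClaims Y m ω = u + m by omega⟩

theorem compl_ruinTime_zero_ne_top (Y : ℕ → Ω → ℕ) :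
    {ω | ruinTime Y 0 ω ≠ ⊤}ᶜ = ⋂ n, survivalSet Y n := by
  ext ω
  simp only [Set.mem_compl_iff, Set.mem_ofPred_eq, ruinTime_ne_top_iff, riskProc, not_exists,
    not_and, not_le, Set.mem_iInter, survivalSet, mem_Icc]
  constructor
  · intro h n t ht
    have := h t ht.1
    omega
  · intro h t ht
    have := h t t ⟨ht, le_rfl⟩
    omega

end Paths

section IIDClaims

variable {Y : ℕ → Ω → ℕ}

theorem claimsSigma_le (hY : ∀ i, Measurable (Y i)) (S : Set ℕ) :
    claimsSigma Y S ≤ ‹MeasureSpace Ω›.toMeasurableSpace :=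
  iSup₂_le fun i _ => (hY i).comap_le

theorem measurableSet_firstHitSet (hY : ∀ i, Measurable (Y i)) (u k : ℕ) :
    MeasurableSet (firstHitSet Y u k) :=
  claimsSigma_le hY _ _ (measurableSet_firstHitSet_claimsSigma u k)

theorem measurableSet_survivalSet (hY : ∀ i, Measurable (Y i)) (n : ℕ) :
    MeasurableSet (survivalSet Y n) := by
  unfold survivalSet aggClaims; measurability

/-- Strong Markov property at the first hitting time. -/
theorem measure_firstHitSet_inter_block (hY : ∀ i, Measurable (Y i)) (hindep : iIndepFun Y ℙ)
    (hid : ∀ i, IdentDistrib (Y i) (Y 0) ℙ ℙ) (u i j : ℕ) :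
    ℙ (firstHitSet Y u i ∩ {ω | ∑ l ∈ range j, Y (i + 1 + l) ω = j}) =
      ℙ (firstHitSet Y u i) * ℙ (hitSet Y 0 j) := by
  have hpast_future := indep_iSup_of_disjoint (fun l => (hY l).comap_le)
    ((iIndepFun_iff_iIndep _ _ _).1 hindep) (Set.Iio_disjoint_Ici (le_refl (i + 1)))
  rw [(Indep_iff _ _ _).1 hpast_future _ {ω | ∑ l ∈ range j, Y (i + 1 + l) ω = j}
    (measurableSet_firstHitSet_claimsSigma u i)
    (measurable_sum_claimsSigma (fun l _ => by simp) (measurableSet_singleton j))]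
  have hshift := hindep.measure_preimage_reindex hY hid (add_right_injective (i + 1))
    (E := {x | ∑ l ∈ range j, x l = j}) (by measurability)
  simp only [hitSet, zero_add]
  exact congrArg (ℙ (firstHitSet Y u i) * ·) hshift

theorem measure_hitSet_succ (hY : ∀ i, Measurable (Y i)) (hindep : iIndepFun Y ℙ)
    (hid : ∀ i, IdentDistrib (Y i) (Y 0) ℙ ℙ) (u k : ℕ) :
    ℙ (hitSet Y u (k + 1)) =
      ∑ p ∈ antidiagonal k, ℙ (firstHitSet Y u p.1) * ℙ (hitSet Y 0 p.2) := by
  rw [hitSet_succ_eq_biUnion, measure_biUnion_finset]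
  · exact sum_congr rfl fun p _ => measure_firstHitSet_inter_block hY hindep hid u p.1 p.2
  · intro p hp q hq hpq
    have : p.1 ≠ q.1 := fun h => hpq <| by
      rw [mem_coe, HasAntidiagonal.mem_antidiagonal] at hp hq
      exact Prod.ext h (by omega)
    exact (disjoint_disjointed _ this).mono Set.inter_subset_left Set.inter_subset_left
  · exact fun p _ => (measurableSet_firstHitSet hY u p.1).inter (by measurability)

theorem ae_tendsto_aggClaims_div (hindep : iIndepFun Y ℙ)
    (hid : ∀ i, IdentDistrib (Y i) (Y 0) ℙ ℙ) (hint : Integrable (fun ω => (Y 0 ω : ℝ)) ℙ) :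
    ∀ᵐ ω ∂ℙ, Tendsto (fun n : ℕ => (aggClaims Y n ω : ℝ) / n) atTop
      (𝓝 (∫ ω, (Y 0 ω : ℝ) ∂ℙ)) := by
  filter_upwards [strong_law_ae_real (fun i ω => (Y i ω : ℝ)) hint
    (fun i j hij => (hindep.indepFun hij).comp measurable_from_top measurable_from_top)
    (fun i => (hid i).comp measurable_from_top)] with ω hω
  simpa [aggClaims] using hω

theorem ae_eventually_aggClaims_lt (hindep : iIndepFun Y ℙ)
    (hid : ∀ i, IdentDistrib (Y i) (Y 0) ℙ ℙ) (hint : Integrable (fun ω => (Y 0 ω : ℝ)) ℙ)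
    (hμ : ∫ ω, (Y 0 ω : ℝ) ∂ℙ < 1) : ∀ᵐ ω ∂ℙ, ∀ᶠ t in atTop, aggClaims Y t ω < t := by
  filter_upwards [ae_tendsto_aggClaims_div hindep hid hint] with ω hω
  filter_upwards [hω.eventually_lt_const hμ, eventually_gt_atTop 0] with t ht ht0
  rw [div_lt_one (by positivity)] at ht
  exact_mod_cast ht

theorem measure_ruinTime_ne_top (hY : ∀ i, Measurable (Y i)) (hindep : iIndepFun Y ℙ)
    (hid : ∀ i, IdentDistrib (Y i) (Y 0) ℙ ℙ) (hint : Integrable (fun ω => (Y 0 ω : ℝ)) ℙ)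
    (hμ : ∫ ω, (Y 0 ω : ℝ) ∂ℙ < 1) (u : ℕ) :
    ℙ {ω | ruinTime Y (u : ℤ) ω ≠ ⊤} = ∑' k, ℙ (firstHitSet Y u k) := by
  have hae : {ω | ruinTime Y (u : ℤ) ω ≠ ⊤} =ᵐ[ℙ] ⋃ k, hitSet Y u (k + 1) := by
    rw [Filter.eventuallyEq_set]
    filter_upwards [ae_eventually_aggClaims_lt hindep hid hint hμ] with ω hω
    simp only [Set.mem_ofPred_eq, ruinTime_ne_top_iff, riskProc, Set.mem_iUnion, hitSet]
    constructor
    · rintro ⟨t, ht, hruin⟩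
      obtain ⟨m, hm, hhit⟩ := exists_mem_hitSet_of_le hω (u := u) (t := t) (by omega)
      exact ⟨m - 1, by rw [Nat.sub_add_cancel (by omega)]; exact hhit⟩
    · rintro ⟨k, hk⟩
      exact ⟨k + 1, by omega, by push_cast; omega⟩
  rw [measure_congr hae, ← iUnion_disjointed,
    measure_iUnion (disjoint_disjointed _) (measurableSet_firstHitSet hY u)]
  rfl

theorem measure_rotation_eq_survivalSet (hY : ∀ i, Measurable (Y i)) (hindep : iIndepFun Y ℙ)
    (hid : ∀ i, IdentDistrib (Y i) (Y 0) ℙ ℙ) {n : ℕ} (hn : 0 < n) (r : ℕ) :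
    ℙ {ω | ∀ t ∈ Icc (1 : ℕ) n, ∑ i ∈ range t, Y ((r + i) % n) ω < t} =
      ℙ (survivalSet Y n) := by
  have := hindep.measure_preimage_reindex hY hid (injective_rotate_of_lt hn r)
    (E := {x | ∀ t ∈ Icc (1 : ℕ) n, ∑ i ∈ range t, x i < t}) (by measurability)
  convert this using 2
  · ext ω
    simp only [Set.mem_preimage, Set.mem_ofPred_eq]
    refine forall₂_congr fun t ht => ?_
    have hrot : ∑ i ∈ range t, Y (if i < n then (r + i) % n else i) ω =
        ∑ i ∈ range t, Y ((r + i) % n) ω :=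
      sum_congr rfl fun i hi => by rw [if_pos ((mem_range.1 hi).trans_le (mem_Icc.1 ht).2)]
    rw [hrot]
  · rfl

/-- All `n` cyclic rotations of the first `n` claims survive with the same probability, and the
cycle lemma counts the surviving rotations pathwise. -/
theorem natCast_mul_measure_survivalSet (hY : ∀ i, Measurable (Y i)) (hindep : iIndepFun Y ℙ)
    (hid : ∀ i, IdentDistrib (Y i) (Y 0) ℙ ℙ) {n : ℕ} (hn : 0 < n) :
    n * ℙ (survivalSet Y n) = ∫⁻ ω, ((n - aggClaims Y n ω : ℕ) : ℝ≥0∞) := by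
  classical
  set A : ℕ → Set Ω := fun r => {ω | ∀ t ∈ Icc (1 : ℕ) n, ∑ i ∈ range t, Y ((r + i) % n) ω < t}
  have hA (r : ℕ) : MeasurableSet (A r) := by simp only [A]; measurability
  calc n * ℙ (survivalSet Y n) = ∑ r ∈ range n, ℙ (A r) := by
        rw [sum_congr rfl fun r _ => measure_rotation_eq_survivalSet hY hindep hid hn r,
          sum_const, card_range, nsmul_eq_mul]
    _ = ∫⁻ ω, ∑ r ∈ range n, (A r).indicator 1 ω := by
        rw [lintegral_finsetSum _ fun r _ => measurable_one.indicator (hA r)]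
        simp only [lintegral_indicator_one (hA _)]
    _ = _ := lintegral_congr fun ω => by
        simp only [Set.indicator_apply, Pi.one_apply]
        rw [sum_boole, ← Nat.count_eq_card_filter_range]
        exact congrArg _ (count_rotations_sum_range_lt (fun i => Y i ω) hn)

end IIDClaims

section ProbabilityMeasure

variable [IsProbabilityMeasure (ℙ : Measure Ω)] {Y : ℕ → Ω → ℕ}

theorem tendsto_measure_survivalSet (hY : ∀ i, Measurable (Y i)) (hindep : iIndepFun Y ℙ)
    (hid : ∀ i, IdentDistrib (Y i) (Y 0) ℙ ℙ) (hint : Integrable (fun ω => (Y 0 ω : ℝ)) ℙ) :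
    Tendsto (fun n => ℙ (survivalSet Y n)) atTop
      (𝓝 (1 - ENNReal.ofReal (∫ ω, (Y 0 ω : ℝ) ∂ℙ))) := by
  let F : ℕ → Ω → ℝ≥0∞ := fun n ω => 1 - ENNReal.ofReal ((aggClaims Y n ω : ℝ) / n)
  have hF (n : ℕ) (hn : 0 < n) : ℙ (survivalSet Y n) = ∫⁻ ω, F n ω := by
    have hn' : (n : ℝ≥0∞) ≠ 0 := by exact_mod_cast hn.ne'
    rw [← ENNReal.inv_mul_cancel_left hn' (ENNReal.natCast_ne_top n) (b := ℙ (survivalSet Y n)),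
      natCast_mul_measure_survivalSet hY hindep hid hn, mul_comm,
      ← lintegral_mul_const' _ _ (ENNReal.inv_ne_top.2 hn')]
    refine lintegral_congr fun ω => ?_
    simp only [F]
    rw [ENNReal.ofReal_div_of_pos (show (0 : ℝ) < n by exact_mod_cast hn),
      ENNReal.ofReal_natCast, ENNReal.ofReal_natCast, ← div_eq_mul_inv, ENNReal.natCast_sub,
      ENNReal.sub_div fun _ _ => hn', ENNReal.div_self hn' (ENNReal.natCast_ne_top n)]
  have hdom := tendsto_lintegral_of_dominated_convergence (μ := ℙ) (F := F)
    (f := fun _ => 1 - ENNReal.ofReal (∫ ω, (Y 0 ω : ℝ) ∂ℙ)) 1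
    (fun n => by simp only [F, aggClaims]; measurability)
    (fun n => ae_of_all _ fun ω => tsub_le_self) (by simp)
    (by filter_upwards [ae_tendsto_aggClaims_div hindep hid hint] with ω hω
        exact ENNReal.Tendsto.sub tendsto_const_nhds (ENNReal.tendsto_ofReal hω)
          (Or.inl ENNReal.one_ne_top))
  rw [lintegral_const, measure_univ, mul_one] at hdom
  exact hdom.congr' (eventually_atTop.2 ⟨1, fun n hn => (hF n hn).symm⟩)

theorem measure_iInter_survivalSet (hY : ∀ i, Measurable (Y i)) (hindep : iIndepFun Y ℙ)
    (hid : ∀ i, IdentDistrib (Y i) (Y 0) ℙ ℙ) (hint : Integrable (fun ω => (Y 0 ω : ℝ)) ℙ) :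
    ℙ (⋂ n, survivalSet Y n) = 1 - ENNReal.ofReal (∫ ω, (Y 0 ω : ℝ) ∂ℙ) :=
  tendsto_nhds_unique (tendsto_measure_iInter_atTop
      (fun n => (measurableSet_survivalSet hY n).nullMeasurableSet)
      (fun _ _ hmn _ hω t ht => hω t (Icc_subset_Icc_right hmn ht)) ⟨0, measure_ne_top _ _⟩)
    (tendsto_measure_survivalSet hY hindep hid hint)

theorem measure_ruinTime_zero_ne_top (hY : ∀ i, Measurable (Y i)) (hindep : iIndepFun Y ℙ)
    (hid : ∀ i, IdentDistrib (Y i) (Y 0) ℙ ℙ) (hint : Integrable (fun ω => (Y 0 ω : ℝ)) ℙ)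
    (hμ : ∫ ω, (Y 0 ω : ℝ) ∂ℙ < 1) :
    ℙ {ω | ruinTime Y 0 ω ≠ ⊤} = ENNReal.ofReal (∫ ω, (Y 0 ω : ℝ) ∂ℙ) := by
  rw [← compl_compl {ω | ruinTime Y 0 ω ≠ ⊤}, compl_ruinTime_zero_ne_top,
    prob_compl_eq_one_sub (.iInter (measurableSet_survivalSet hY)),
    measure_iInter_survivalSet hY hindep hid hint,
    ENNReal.sub_sub_cancel ENNReal.one_ne_top (ENNReal.ofReal_le_one.2 hμ.le)]

theorem tsum_measure_hitSet_zero (hY : ∀ i, Measurable (Y i)) (hindep : iIndepFun Y ℙ)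
    (hid : ∀ i, IdentDistrib (Y i) (Y 0) ℙ ℙ) (hint : Integrable (fun ω => (Y 0 ω : ℝ)) ℙ)
    (hμ : ∫ ω, (Y 0 ω : ℝ) ∂ℙ < 1) :
    ∑' j, ℙ (hitSet Y 0 j) = (1 - ENNReal.ofReal (∫ ω, (Y 0 ω : ℝ) ∂ℙ))⁻¹ := by
  have hreturn := measure_ruinTime_ne_top hY hindep hid hint hμ 0
  rw [Nat.cast_zero, measure_ruinTime_zero_ne_top hY hindep hid hint hμ] at hreturn
  have hstart : ℙ (hitSet Y 0 0) = 1 := by simp [hitSet, aggClaims]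
  rw [hreturn]
  exact ENNReal.tsum_eq_inv_one_sub_of_renewal hstart (measure_hitSet_succ hY hindep hid 0)
    (hreturn ▸ ENNReal.ofReal_lt_one.2 hμ)

end ProbabilityMeasure

/-- Infinite-horizon classical ruin probability:
`P_u(T_0 < ∞) = (1 - μ) ∑_{j=u+1}^∞ p^{*(j-u)}_j` (with `j = u + 1 + k`). -/
theorem ruin_prob_infinite_horizon
    [IsProbabilityMeasure (ℙ : Measure Ω)]
    (Y : ℕ → Ω → ℕ) (hY : ∀ i, Measurable (Y i))
    (hindep : iIndepFun Y ℙ)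
    (hid : ∀ i, IdentDistrib (Y i) (Y 0) ℙ ℙ)
    (hint : Integrable (fun ω => (Y 0 ω : ℝ)) ℙ)
    (hμ : ∫ ω, (Y 0 ω : ℝ) ∂ℙ < 1)
    (u : ℕ) :
    (ℙ {ω | ruinTime Y (u : ℤ) ω ≠ ⊤}).toReal =
      (1 - ∫ ω, (Y 0 ω : ℝ) ∂ℙ) *
        ∑' k : ℕ, (ℙ {ω | aggClaims Y (k + 1) ω = u + 1 + k}).toReal := by
  have hμ₀ : 0 ≤ ∫ ω, (Y 0 ω : ℝ) ∂ℙ := integral_nonneg fun ω => Nat.cast_nonneg _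
  have hhit (k : ℕ) : {ω | aggClaims Y (k + 1) ω = u + 1 + k} = hitSet Y u (k + 1) := by
    ext ω; simp only [hitSet, Set.mem_ofPred_eq]; omega
  have hsum : ∑' k, ℙ (hitSet Y u (k + 1)) =
      ℙ {ω | ruinTime Y u ω ≠ ⊤} * (1 - ENNReal.ofReal (∫ ω, (Y 0 ω : ℝ) ∂ℙ))⁻¹ := by
    rw [tsum_congr (measure_hitSet_succ hY hindep hid u),
      measure_ruinTime_ne_top hY hindep hid hint hμ u,
      ← tsum_measure_hitSet_zero hY hindep hid hint hμ,
      ENNReal.tsum_mul_tsum_eq_tsum_sum_antidiagonal]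
  simp_rw [hhit]
  rw [← ENNReal.tsum_toReal_eq fun _ => measure_ne_top _ _, hsum, ENNReal.toReal_mul,
    ENNReal.toReal_inv, ENNReal.toReal_sub_of_le (ENNReal.ofReal_le_one.2 hμ.le)
    ENNReal.one_ne_top, ENNReal.toReal_one, ENNReal.toReal_ofReal hμ₀]
  field_simp [(sub_pos.2 hμ).ne']
end
end
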